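/- arXiv:math/0102047 — 2 statements merged into one kernel-verified Lean document; each statement's English description precedes it below -/
import Mathlib

section
/- If s_{a_1} s_{a_2} ⋯ s_{a_k} and s_{b_1} s_{b_2} ⋯ s_{b_k} are two reduced words for the same permutation w (so k = ℓ(w), the number of inversions of w), then the composed operators ∂_{a_1} ∘ ∂_{a_2} ∘ ⋯ ∘ ∂_{a_k} and ∂_{b_1} ∘ ∂_{b_2} ∘ ⋯ ∘ ∂_{b_k} agree on every polynomial in ℤ[x_1, x_2, …]; hence the operator ∂_w is well defined, independent of the chosen reduced word. -/
open MvPolynomial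
open scoped Classical

/-- The polynomial ring ℤ[x₁,x₂,…]: the variable with index `i : ℕ` represents `x_{i+1}`. -/
abbrev PolyRing : Type := MvPolynomial ℕ ℤ

/-- The action of the simple transposition `s_{i+1}` on ℤ[x₁,x₂,…]
(exchanging the variables `x_{i+1}` and `x_{i+2}` and fixing all others). -/
noncomputable def sAct (i : ℕ) (f : PolyRing) : PolyRing :=
  rename (Equiv.swap i (i + 1)) f

/-- The divided difference operator `∂_{i+1}`: the unique polynomial `g` with
`(x_{i+1} - x_{i+2}) * g = f - s_{i+1} f` (it exists, and is unique since the
polynomial ring is a domain). -/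
noncomputable def divDiff (i : ℕ) (f : PolyRing) : PolyRing :=
  if h : ∃ g : PolyRing, (X i - X (i + 1)) * g = f - sAct i f then h.choose else 0

/-- Composite divided difference operator `∂_{a₁} ∘ ∂_{a₂} ∘ ⋯ ∘ ∂_{a_k}` along a word
`a = [a₁, a₂, …, a_k]` (so `∂_{a_k}` is applied first). -/
noncomputable def divDiffWord (a : List ℕ) (f : PolyRing) : PolyRing :=
  a.foldr divDiff f

/-- The length `ℓ(w)` (number of inversions) of a permutation of `{1,2,…}`
(indices shifted down by one, so positions are indexed by `ℕ`). -/
noncomputable def len (w : Equiv.Perm ℕ) : ℕ :=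
  Set.ncard {p : ℕ × ℕ | p.1 < p.2 ∧ w p.2 < w p.1}

/-- `a = [a₁, …, a_k]` is a reduced word for `w`: the product of the corresponding simple
transpositions `s_{a₁} s_{a₂} ⋯ s_{a_k}` is `w` and `k = ℓ(w)`, the number of inversions. -/
def IsReducedWord (w : Equiv.Perm ℕ) (a : List ℕ) : Prop :=
  (a.map fun i => Equiv.swap i (i + 1)).prod = w ∧ a.length = len w

namespace DDAux


/-- inversion set -/
def InvSet (w : Equiv.Perm ℕ) : Set (ℕ × ℕ) := {p : ℕ × ℕ | p.1 < p.2 ∧ w p.2 < w p.1}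

abbrev sw (i : ℕ) : Equiv.Perm ℕ := Equiv.swap i (i+1)

lemma swap_succ_lt_iff (i x y : ℕ) :
    Equiv.swap i (i+1) x < Equiv.swap i (i+1) y ↔
      (if (x = i ∧ y = i + 1) ∨ (x = i + 1 ∧ y = i) then y < x else x < y) := by
  simp only [Equiv.swap_apply_def]
  split_ifs <;> omega

lemma invSet_swap_mul (v : Equiv.Perm ℕ) (i : ℕ) :
    InvSet (sw i * v) =
      if v⁻¹ i < v⁻¹ (i+1) then insert (v⁻¹ i, v⁻¹ (i+1)) (InvSet v)
      else InvSet v \ {(v⁻¹ (i+1), v⁻¹ i)} := by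
  ext ⟨p, q⟩
  simp only [InvSet, Set.mem_setOf_eq, Equiv.Perm.mul_apply, swap_succ_lt_iff]
  by_cases hlt : v⁻¹ i < v⁻¹ (i+1)
  · rw [if_pos hlt]
    simp only [Set.mem_insert_iff, Set.mem_setOf_eq, Prod.mk.injEq]
    constructor
    · rintro ⟨hpq, hcond⟩
      by_cases hc : (v q = i ∧ v p = i + 1) ∨ (v q = i + 1 ∧ v p = i)
      · rw [if_pos hc] at hcond
        rcases hc with ⟨h1, h2⟩ | ⟨h1, h2⟩
        · exfalso
          have hq : q = v⁻¹ i := by rw [← h1]; simp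
          have hp : p = v⁻¹ (i+1) := by rw [← h2]; simp
          omega
        · left
          constructor
          · rw [← h2]; simp
          · rw [← h1]; simp
      · rw [if_neg hc] at hcond
        right; exact ⟨hpq, hcond⟩
    · rintro (⟨hp, hq⟩ | ⟨hpq, hvv⟩)
      · subst hp; subst hq
        refine ⟨hlt, ?_⟩
        have hc : (v (v⁻¹ (i+1)) = i ∧ v (v⁻¹ i) = i + 1) ∨
            (v (v⁻¹ (i+1)) = i + 1 ∧ v (v⁻¹ i) = i) := by right; simp
        rw [if_pos hc]; simp
      · refine ⟨hpq, ?_⟩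
        have hc : ¬((v q = i ∧ v p = i + 1) ∨ (v q = i + 1 ∧ v p = i)) := by
          rintro (⟨h1, h2⟩ | ⟨h1, h2⟩)
          · have hq : q = v⁻¹ i := by rw [← h1]; simp
            have hp : p = v⁻¹ (i+1) := by rw [← h2]; simp
            omega
          · omega
        rw [if_neg hc]; exact hvv
  · rw [if_neg hlt]
    have hne : v⁻¹ i ≠ v⁻¹ (i+1) := by
      intro h; exact (by omega : i ≠ i + 1) (v⁻¹.injective h)
    have hgt : v⁻¹ (i+1) < v⁻¹ i := by omega
    simp only [Set.mem_diff, Set.mem_singleton_iff, Set.mem_setOf_eq, Prod.mk.injEq]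
    constructor
    · rintro ⟨hpq, hcond⟩
      by_cases hc : (v q = i ∧ v p = i + 1) ∨ (v q = i + 1 ∧ v p = i)
      · rw [if_pos hc] at hcond
        exfalso
        rcases hc with ⟨h1, h2⟩ | ⟨h1, h2⟩
        · omega
        · have hq : q = v⁻¹ (i+1) := by rw [← h1]; simp
          have hp : p = v⁻¹ i := by rw [← h2]; simp
          omega
      · rw [if_neg hc] at hcond
        refine ⟨⟨hpq, hcond⟩, ?_⟩
        rintro ⟨hp, hq⟩
        exact hc (Or.inl ⟨by rw [hq]; simp, by rw [hp]; simp⟩)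
    · rintro ⟨⟨hpq, hvv⟩, hne2⟩
      refine ⟨hpq, ?_⟩
      have hc : ¬((v q = i ∧ v p = i + 1) ∨ (v q = i + 1 ∧ v p = i)) := by
        rintro (⟨h1, h2⟩ | ⟨h1, h2⟩)
        · have hq : q = v⁻¹ i := by rw [← h1]; simp
          have hp : p = v⁻¹ (i+1) := by rw [← h2]; simp
          exact hne2 ⟨hp, hq⟩
        · omega
      rw [if_neg hc]; exact hvv



lemma symm_ne (v : Equiv.Perm ℕ) (i : ℕ) : v⁻¹ i ≠ v⁻¹ (i+1) := by
  intro h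
  exact (by omega : i ≠ i + 1) (v⁻¹.injective h)

lemma pair_not_mem (v : Equiv.Perm ℕ) {i : ℕ} (h : v⁻¹ i < v⁻¹ (i+1)) :
    (v⁻¹ i, v⁻¹ (i+1)) ∉ InvSet v := by
  intro hm
  have := hm.2
  simp only [← Equiv.Perm.mul_apply, mul_inv_cancel, Equiv.Perm.one_apply] at this
  omega

lemma pair_mem (v : Equiv.Perm ℕ) {i : ℕ} (h : v⁻¹ (i+1) < v⁻¹ i) :
    (v⁻¹ (i+1), v⁻¹ i) ∈ InvSet v := by
  refine ⟨h, ?_⟩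
  simp only [← Equiv.Perm.mul_apply, mul_inv_cancel, Equiv.Perm.one_apply]
  omega

lemma invSet_swap_mul_finite {v : Equiv.Perm ℕ} (i : ℕ) (hfin : (InvSet v).Finite) :
    (InvSet (sw i * v)).Finite := by
  rw [invSet_swap_mul]
  split_ifs
  · exact hfin.insert _
  · exact hfin.diff

lemma ncard_swap_mul_of_lt {v : Equiv.Perm ℕ} {i : ℕ} (hfin : (InvSet v).Finite)
    (h : v⁻¹ i < v⁻¹ (i+1)) :
    (InvSet (sw i * v)).ncard = (InvSet v).ncard + 1 := by
  rw [invSet_swap_mul, if_pos h]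
  exact Set.ncard_insert_of_notMem (pair_not_mem v h) hfin

lemma ncard_swap_mul_of_gt {v : Equiv.Perm ℕ} {i : ℕ} (hfin : (InvSet v).Finite)
    (h : v⁻¹ (i+1) < v⁻¹ i) :
    (InvSet v).ncard = (InvSet (sw i * v)).ncard + 1 := by
  rw [invSet_swap_mul, if_neg (by omega)]
  exact (Set.ncard_diff_singleton_add_one (pair_mem v h) hfin).symm

lemma strictMono_surj_id {g : ℕ → ℕ} (hg : StrictMono g) (hs : Function.Surjective g) :
    ∀ n, g n = n := by
  intro n
  induction n using Nat.strong_induction_on with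
  | _ n IH =>
    have h1 : n ≤ g n := hg.le_apply
    rcases eq_or_lt_of_le h1 with h | h
    · exact h.symm
    · exfalso
      obtain ⟨m, hm⟩ := hs n
      have hmn : m < n := by
        by_contra hc
        have := hg.le_iff_le.mpr (not_lt.mp hc : n ≤ m)
        omega
      rw [IH m hmn] at hm
      omega

lemma eq_one_of_invSet_empty {v : Equiv.Perm ℕ} (h : InvSet v = ∅) : v = 1 := by
  have hm : StrictMono v := by
    intro p q hpq
    have hne : v p ≠ v q := fun hh => (by omega : p ≠ q) (v.injective hh)
    have : (p, q) ∉ InvSet v := by rw [h]; exact Set.notMem_empty _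
    simp only [InvSet, Set.mem_setOf_eq, not_and, not_lt] at this
    have := this hpq
    omega
  have := strictMono_surj_id hm v.surjective
  exact Equiv.ext this

lemma exists_descent {v : Equiv.Perm ℕ} (hne : v ≠ 1) : ∃ i, v⁻¹ (i+1) < v⁻¹ i := by
  by_contra hc
  push_neg at hc
  have hm : StrictMono (fun n => v⁻¹ n) := by
    apply strictMono_nat_of_lt_succ
    intro n
    have := hc n
    have := symm_ne v n
    omega
  have := strictMono_surj_id hm v⁻¹.surjective
  apply hne
  have hv : v⁻¹ = 1 := Equiv.ext this
  calc v = (v⁻¹)⁻¹ := by simp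
  _ = 1 := by rw [hv]; simp

def wprod (c : List ℕ) : Equiv.Perm ℕ := (c.map fun i => Equiv.swap i (i+1)).prod

lemma wprod_nil : wprod [] = 1 := rfl
lemma wprod_cons (i : ℕ) (c : List ℕ) : wprod (i :: c) = sw i * wprod c := by
  simp [wprod]

lemma invSet_one : InvSet 1 = ∅ := by
  ext ⟨p, q⟩
  simp only [InvSet, Set.mem_setOf_eq, Equiv.Perm.one_apply, Set.mem_empty_iff_false, iff_false]
  omega

lemma wprod_finite_le (c : List ℕ) :
    (InvSet (wprod c)).Finite ∧ (InvSet (wprod c)).ncard ≤ c.length := by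
  induction c with
  | nil => simp [wprod_nil, invSet_one]
  | cons i c IH =>
    obtain ⟨hfin, hle⟩ := IH
    rw [wprod_cons]
    refine ⟨invSet_swap_mul_finite i hfin, ?_⟩
    rcases lt_or_gt_of_ne (symm_ne (wprod c) i) with h | h
    · rw [ncard_swap_mul_of_lt hfin h]; simpa using hle
    · have := ncard_swap_mul_of_gt hfin h
      simp only [List.length_cons]
      omega

lemma exists_reduced_word {v : Equiv.Perm ℕ} (hfin : (InvSet v).Finite) :
    ∃ c : List ℕ, wprod c = v ∧ c.length = (InvSet v).ncard := by
  generalize hn : (InvSet v).ncard = n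
  induction n using Nat.strong_induction_on generalizing v with
  | _ n IH =>
    rcases Nat.eq_zero_or_pos n with h0 | hpos
    · subst h0
      have : InvSet v = ∅ := (Set.ncard_eq_zero hfin).mp hn
      have hv := eq_one_of_invSet_empty this
      exact ⟨[], by simp [wprod_nil, hv], by simp [hn]⟩
    · have hne : v ≠ 1 := by
        intro h
        rw [h, invSet_one] at hn
        simp at hn
        omega
      obtain ⟨i, hi⟩ := exists_descent hne
      have hfin' : (InvSet (sw i * v)).Finite := invSet_swap_mul_finite i hfin
      have hcount := ncard_swap_mul_of_gt hfin hi
      obtain ⟨c, hc1, hc2⟩ := IH (n - 1) (by omega) hfin' (by omega)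
      refine ⟨i :: c, ?_, ?_⟩
      · rw [wprod_cons, hc1, ← mul_assoc, Equiv.swap_mul_self, one_mul]
      · simp [hc2]; omega

lemma sw_comm {i j : ℕ} (h : i + 1 < j) : sw i * sw j = sw j * sw i := by
  ext x
  simp only [Equiv.Perm.mul_apply, Equiv.swap_apply_def]
  split_ifs <;> omega

lemma sw_braid (i : ℕ) : sw i * sw (i+1) * sw i = sw (i+1) * sw i * sw (i+1) := by
  have h1 := Equiv.swap_mul_swap_mul_swap (x := i+2) (y := i+1) (z := i)
    (by omega) (by omega)
  have h2 := Equiv.swap_mul_swap_mul_swap (x := i) (y := i+1) (z := i+2)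
    (by omega) (by omega)
  simp only [Equiv.swap_comm (i+1) i, Equiv.swap_comm (i+2) (i+1),
    Equiv.swap_comm (i+2) i] at h1 h2
  rw [show sw i * sw (i+1) * sw i = Equiv.swap i (i+1) * Equiv.swap (i+1) (i+2) * Equiv.swap i (i+1) from rfl]
  rw [show sw (i+1) * sw i * sw (i+1) = Equiv.swap (i+1) (i+2) * Equiv.swap i (i+1) * Equiv.swap (i+1) (i+2) from rfl]
  rw [h1, h2]



lemma X_sub_ne {i j : ℕ} (h : i ≠ j) : (X i : PolyRing) - X j ≠ 0 :=
  sub_ne_zero.mpr (fun hh => h (X_injective hh))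

lemma dvd_sub_sAct (i : ℕ) (f : PolyRing) : (X i - X (i + 1)) ∣ (f - sAct i f) := by
  induction f using MvPolynomial.induction_on with
  | C a => simp [sAct, rename_C]
  | add p q hp hq =>
    have : p + q - sAct i (p + q) = (p - sAct i p) + (q - sAct i q) := by
      simp only [sAct, map_add]; ring
    rw [this]; exact dvd_add hp hq
  | mul_X p n hp =>
    have hs : sAct i (p * X n) = sAct i p * X (Equiv.swap i (i+1) n) := by
      simp [sAct, rename_X]
    have key : p * X n - sAct i (p * X n)
        = (p - sAct i p) * X n + sAct i p * (X n - X (Equiv.swap i (i+1) n)) := by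
      rw [hs]; ring
    rw [key]
    refine dvd_add (Dvd.dvd.mul_right hp _) (Dvd.dvd.mul_left ?_ _)
    rcases eq_or_ne n i with rfl | hni
    · simp [Equiv.swap_apply_left]
    rcases eq_or_ne n (i+1) with rfl | hni1
    · rw [Equiv.swap_apply_right]
      exact ⟨-1, by ring⟩
    · rw [Equiv.swap_apply_of_ne_of_ne hni hni1]
      simp

lemma divDiff_spec (i : ℕ) (f : PolyRing) :
    (X i - X (i + 1)) * divDiff i f = f - sAct i f := by
  obtain ⟨g, hg⟩ := dvd_sub_sAct i f
  have hex : ∃ g : PolyRing, (X i - X (i + 1)) * g = f - sAct i f := ⟨g, hg.symm⟩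
  rw [divDiff, dif_pos hex]
  exact hex.choose_spec



abbrev KK : Type := FractionRing PolyRing

noncomputable instance : Field KK := inferInstance

noncomputable def ι : PolyRing →+* KK := algebraMap PolyRing KK

lemma ι_inj : Function.Injective ι := IsFractionRing.injective PolyRing KK

lemma ι_X_sub_ne {i j : ℕ} (h : i ≠ j) : ι (X i) - ι (X j) ≠ 0 := by
  rw [← map_sub]
  intro h0
  exact X_sub_ne h (ι_inj (by rw [h0, map_zero]))

noncomputable def sHom (i : ℕ) : PolyRing →+* PolyRing :=
  (MvPolynomial.renameEquiv ℤ (sw i)).toRingEquiv.toRingHom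

lemma sHom_apply (i : ℕ) (f : PolyRing) : sHom i f = sAct i f := rfl

lemma sHom_inj (i : ℕ) : Function.Injective (sHom i) :=
  (MvPolynomial.renameEquiv ℤ (sw i)).toRingEquiv.injective

noncomputable def σ (i : ℕ) : KK →+* KK :=
  IsFractionRing.lift (g := ι.comp (sHom i)) (ι_inj.comp (sHom_inj i))

lemma σ_ι (i : ℕ) (f : PolyRing) : σ i (ι f) = ι (sAct i f) := by
  have := IsFractionRing.lift_algebraMap (K := KK)
    (g := ι.comp (sHom i)) (ι_inj.comp (sHom_inj i)) f
  simpa [σ, ι, sHom_apply] using this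

lemma sAct_perm (i : ℕ) (f : PolyRing) : sAct i f = rename ⇑(sw i) f := rfl

lemma sAct_rename (i : ℕ) (e : Equiv.Perm ℕ) (f : PolyRing) :
    sAct i (rename ⇑e f) = rename ⇑(sw i * e) f := by
  simp [sAct_perm, rename_rename, Equiv.Perm.coe_mul]

lemma sAct_sAct (i j : ℕ) (f : PolyRing) :
    sAct i (sAct j f) = rename ⇑(sw i * sw j) f := by
  rw [sAct_perm j, sAct_rename]

lemma σ_comp_eq {i j k l : ℕ}
    (h : sw i * sw j = sw k * sw l) :
    ∀ φ : KK, σ i (σ j φ) = σ k (σ l φ) := by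
  have : (σ i).comp (σ j) = (σ k).comp (σ l) := by
    apply IsLocalization.ringHom_ext (nonZeroDivisors PolyRing)
    refine RingHom.ext fun f => ?_
    simp only [RingHom.comp_apply]
    show σ i (σ j (ι f)) = σ k (σ l (ι f))
    rw [σ_ι, σ_ι, σ_ι, σ_ι, sAct_sAct, sAct_sAct, h]
  intro φ
  exact RingHom.congr_fun this φ

lemma σ_invol (i : ℕ) (φ : KK) : σ i (σ i φ) = φ := by
  have : (σ i).comp (σ i) = RingHom.id KK := by
    apply IsLocalization.ringHom_ext (nonZeroDivisors PolyRing)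
    refine RingHom.ext fun f => ?_
    simp only [RingHom.comp_apply, RingHom.id_apply]
    show σ i (σ i (ι f)) = ι f
    rw [σ_ι, σ_ι, sAct_sAct, Equiv.swap_mul_self]
    simp
  exact RingHom.congr_fun this φ

lemma σ_comm {i j : ℕ} (h : i + 1 < j) (φ : KK) : σ i (σ j φ) = σ j (σ i φ) :=
  σ_comp_eq (sw_comm h) φ

lemma σ_braid (i : ℕ) (φ : KK) :
    σ (i+1) (σ i (σ (i+1) φ)) = σ i (σ (i+1) (σ i φ)) := by
  have h3 : (σ (i+1)).comp ((σ i).comp (σ (i+1))) = (σ i).comp ((σ (i+1)).comp (σ i)) := by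
    apply IsLocalization.ringHom_ext (nonZeroDivisors PolyRing)
    refine RingHom.ext fun f => ?_
    simp only [RingHom.comp_apply]
    show σ (i+1) (σ i (σ (i+1) (ι f))) = σ i (σ (i+1) (σ i (ι f)))
    rw [σ_ι, σ_ι, σ_ι, σ_ι, σ_ι, σ_ι, sAct_sAct i (i+1) f, sAct_rename (i+1),
      sAct_sAct (i+1) i f, sAct_rename i, ← mul_assoc, ← mul_assoc, sw_braid]
  exact RingHom.congr_fun h3 φ

lemma σ_X (i n : ℕ) : σ i (ι (X n)) = ι (X (sw i n)) := by
  rw [σ_ι]; simp [sAct, rename_X]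

noncomputable def Dk (i : ℕ) (φ : KK) : KK :=
  (φ - σ i φ) / (ι (X i) - ι (X (i+1)))


lemma comm_calc {F : Type*} [Field F] (A B C D φ p q r : F)
    (hAB : A - B ≠ 0) (hCD : C - D ≠ 0) :
    ((φ - q)/(C-D) - (p - r)/(C-D))/(A-B) = ((φ - p)/(A-B) - (q - r)/(A-B))/(C-D) := by
  field_simp
  ring

set_option maxHeartbeats 4000000 in
lemma braid_calc {F : Type*} [Field F] (A B C φ p1 p2 p12 p21 p121 : F)
    (hAB : A - B ≠ 0) (hBC : B - C ≠ 0) (hAC : A - C ≠ 0) :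
    (((φ - p1)/(A-B) - (p2 - p21)/(A-C))/(B-C)
       - ((p1 - φ)/(B-A) - (p12 - p121)/(B-C))/(A-C))/(A-B)
    = (((φ - p2)/(B-C) - (p1 - p12)/(A-C))/(A-B)
       - ((p2 - φ)/(C-B) - (p21 - p121)/(A-B))/(A-C))/(B-C) := by
  have e1 : B - A = -(A-B) := by ring
  have e2 : C - B = -(B-C) := by ring
  rw [e1, e2, div_neg, div_neg]
  rw [div_eq_div_iff (by exact fun h => hAB h) (by exact fun h => hBC h)]
  field_simp
  ring

set_option maxHeartbeats 1000000 in
set_option synthInstance.maxHeartbeats 400000 in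
lemma Dk_comm {i j : ℕ} (h : i + 1 < j) (φ : KK) : Dk i (Dk j φ) = Dk j (Dk i φ) := by
  have hAB : ι (X i) - ι (X (i+1)) ≠ 0 := ι_X_sub_ne (by omega)
  have hCD : ι (X j) - ι (X (j+1)) ≠ 0 := ι_X_sub_ne (by omega)
  have siC : σ i (ι (X j)) = ι (X j) := by
    rw [σ_X, Equiv.swap_apply_of_ne_of_ne (by omega) (by omega)]
  have siD : σ i (ι (X (j+1))) = ι (X (j+1)) := by
    rw [σ_X, Equiv.swap_apply_of_ne_of_ne (by omega) (by omega)]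
  have sjA : σ j (ι (X i)) = ι (X i) := by
    rw [σ_X, Equiv.swap_apply_of_ne_of_ne (by omega) (by omega)]
  have sjB : σ j (ι (X (i+1))) = ι (X (i+1)) := by
    rw [σ_X, Equiv.swap_apply_of_ne_of_ne (by omega) (by omega)]
  have hcomm := σ_comm h
  simp only [Dk, map_div₀, map_sub, siC, siD, sjA, sjB, hcomm]
  exact comm_calc _ _ _ _ _ _ _ _ hAB hCD

set_option maxHeartbeats 1000000 in
set_option synthInstance.maxHeartbeats 400000 in
lemma Dk_braid (i : ℕ) (φ : KK) :
    Dk i (Dk (i+1) (Dk i φ)) = Dk (i+1) (Dk i (Dk (i+1) φ)) := by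
  have hAB : ι (X i) - ι (X (i+1)) ≠ 0 := ι_X_sub_ne (by omega)
  have hBC : ι (X (i+1)) - ι (X (i+1+1)) ≠ 0 := ι_X_sub_ne (by omega)
  have hAC : ι (X i) - ι (X (i+1+1)) ≠ 0 := ι_X_sub_ne (by omega)
  have s1A : σ i (ι (X i)) = ι (X (i+1)) := by rw [σ_X, Equiv.swap_apply_left]
  have s1B : σ i (ι (X (i+1))) = ι (X i) := by rw [σ_X, Equiv.swap_apply_right]
  have s1C : σ i (ι (X (i+1+1))) = ι (X (i+1+1)) := by
    rw [σ_X, Equiv.swap_apply_of_ne_of_ne (by omega) (by omega)]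
  have s2A : σ (i+1) (ι (X i)) = ι (X i) := by
    rw [σ_X, Equiv.swap_apply_of_ne_of_ne (by omega) (by omega)]
  have s2B : σ (i+1) (ι (X (i+1))) = ι (X (i+1+1)) := by rw [σ_X, Equiv.swap_apply_left]
  have s2C : σ (i+1) (ι (X (i+1+1))) = ι (X (i+1)) := by rw [σ_X, Equiv.swap_apply_right]
  simp only [Dk, map_div₀, map_sub, s1A, s1B, s1C, s2A, s2B, s2C,
    σ_invol, σ_braid]
  exact braid_calc _ _ _ _ _ _ _ _ _ hAB hBC hAC



/-! ### Main induction -/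

lemma len_eq (w : Equiv.Perm ℕ) : len w = (InvSet w).ncard := rfl

lemma wprod_eq (a : List ℕ) : (a.map fun i => Equiv.swap i (i+1)).prod = wprod a := rfl

lemma swap_mul_cancel (i : ℕ) (e : Equiv.Perm ℕ) : sw i * (sw i * e) = e := by
  rw [← mul_assoc, Equiv.swap_mul_self, one_mul]

lemma inv_swap_mul_apply (e : Equiv.Perm ℕ) (i x : ℕ) :
    (sw i * e)⁻¹ x = e⁻¹ (sw i x) := by
  rw [mul_inv_rev]
  simp [Equiv.Perm.mul_apply, Equiv.swap_inv]

lemma sw_apply_self (i : ℕ) : sw i i = i + 1 := Equiv.swap_apply_left _ _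
lemma sw_apply_succ (i : ℕ) : sw i (i+1) = i := Equiv.swap_apply_right _ _
lemma sw_apply_of_gt {i x : ℕ} (h : i + 1 < x) : sw i x = x :=
  Equiv.swap_apply_of_ne_of_ne (by omega) (by omega)
lemma sw_apply_of_lt {i x : ℕ} (h : x < i) : sw i x = x :=
  Equiv.swap_apply_of_ne_of_ne (by omega) (by omega)

lemma peel {w : Equiv.Perm ℕ} {i : ℕ} {a' : List ℕ} (h : IsReducedWord w (i :: a')) :
    IsReducedWord (sw i * w) a' ∧ w⁻¹ (i+1) < w⁻¹ i ∧
      (InvSet w).Finite ∧ (InvSet (sw i * w)).Finite := by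
  obtain ⟨hp, hl⟩ := h
  rw [wprod_eq, wprod_cons] at hp
  obtain ⟨hfinv, hlev⟩ := wprod_finite_le a'
  have hv : wprod a' = sw i * w := by rw [← hp, swap_mul_cancel]
  have hlen : a'.length + 1 = (InvSet w).ncard := by
    simpa [len_eq] using hl
  rcases lt_or_gt_of_ne (symm_ne (wprod a') i) with hc | hc
  · have hcount := ncard_swap_mul_of_lt hfinv hc
    rw [hp] at hcount
    have hfinw : (InvSet w).Finite := by
      rw [← hp]; exact invSet_swap_mul_finite i hfinv
    have hdes : w⁻¹ (i+1) < w⁻¹ i := by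
      have h1 : w⁻¹ (i+1) = (wprod a')⁻¹ i := by
        rw [← hp, inv_swap_mul_apply, Equiv.swap_apply_right]
      have h2 : w⁻¹ i = (wprod a')⁻¹ (i+1) := by
        rw [← hp, inv_swap_mul_apply, Equiv.swap_apply_left]
      omega
    refine ⟨⟨(wprod_eq a').trans hv, ?_⟩, hdes, hfinw, by rw [← hv]; exact hfinv⟩
    · rw [len_eq, ← hv]; omega
  · have hcount := ncard_swap_mul_of_gt hfinv hc
    rw [hp] at hcount
    omega

lemma foldr_eq (k : ℕ) : ∀ (w : Equiv.Perm ℕ) (a b : List ℕ),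
    IsReducedWord w a → IsReducedWord w b → a.length = k →
    ∀ φ : KK, a.foldr Dk φ = b.foldr Dk φ := by
  induction k using Nat.strong_induction_on with
  | _ k IH =>
    have main : ∀ (w : Equiv.Perm ℕ) (i : ℕ) (a' : List ℕ) (j : ℕ) (b' : List ℕ),
        IsReducedWord w (i::a') → IsReducedWord w (j::b') → (i::a').length = k → i < j →
        ∀ φ : KK, (i::a').foldr Dk φ = (j::b').foldr Dk φ := by
      intro w i a' j b' ha hb hlen hij φ
      obtain ⟨ha', hdi, hfinw, hfina⟩ := peel ha
      obtain ⟨hb', hdj, -, hfinb⟩ := peel hb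
      have hka : a'.length + 1 = k := by simpa using hlen
      have hkb : b'.length = a'.length := by
        have h1 := ha.2; have h2 := hb.2
        simp only [List.length_cons] at h1 h2
        omega
      have hlena : a'.length = (InvSet (sw i * w)).ncard := by
        simpa [len_eq] using ha'.2
      have hlenb : b'.length = (InvSet (sw j * w)).ncard := by
        simpa [len_eq] using hb'.2
      by_cases hj1 : j = i + 1
      · -- adjacent case : j = i + 1
        subst hj1
        -- descent chain on the a-side
        have d1 : (sw i * w)⁻¹ (i+1+1) < (sw i * w)⁻¹ (i+1) := by
          simp only [inv_swap_mul_apply]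
          rw [sw_apply_succ i, sw_apply_of_gt (i := i) (x := i+1+1) (by omega)]
          omega
        have hfm1 : (InvSet (sw (i+1) * (sw i * w))).Finite :=
          invSet_swap_mul_finite _ hfina
        have cm1 : (InvSet (sw i * w)).ncard
            = (InvSet (sw (i+1) * (sw i * w))).ncard + 1 :=
          ncard_swap_mul_of_gt hfina d1
        have d2 : (sw (i+1) * (sw i * w))⁻¹ (i+1) < (sw (i+1) * (sw i * w))⁻¹ i := by
          simp only [inv_swap_mul_apply]
          rw [sw_apply_self (i+1), sw_apply_of_lt (i := i+1) (x := i) (by omega),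
            sw_apply_of_gt (i := i) (x := i+1+1) (by omega), sw_apply_self i]
          exact hdj
        have hfu : (InvSet (sw i * (sw (i+1) * (sw i * w)))).Finite :=
          invSet_swap_mul_finite _ hfm1
        have cu : (InvSet (sw (i+1) * (sw i * w))).ncard
            = (InvSet (sw i * (sw (i+1) * (sw i * w)))).ncard + 1 :=
          ncard_swap_mul_of_gt hfm1 d2
        obtain ⟨u0, hu0p, hu0l⟩ := exists_reduced_word hfu
        -- descent chain on the b-side
        have d1' : (sw (i+1) * w)⁻¹ (i+1) < (sw (i+1) * w)⁻¹ i := by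
          simp only [inv_swap_mul_apply]
          rw [sw_apply_self (i+1), sw_apply_of_lt (i := i+1) (x := i) (by omega)]
          omega
        have hfm2 : (InvSet (sw i * (sw (i+1) * w))).Finite :=
          invSet_swap_mul_finite _ hfinb
        have cm2 : (InvSet (sw (i+1) * w)).ncard
            = (InvSet (sw i * (sw (i+1) * w))).ncard + 1 :=
          ncard_swap_mul_of_gt hfinb d1'
        have d2' : (sw i * (sw (i+1) * w))⁻¹ (i+1+1) < (sw i * (sw (i+1) * w))⁻¹ (i+1) := by
          simp only [inv_swap_mul_apply]
          rw [sw_apply_of_gt (i := i) (x := i+1+1) (by omega), sw_apply_succ (i+1),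
            sw_apply_succ i, sw_apply_of_lt (i := i+1) (x := i) (by omega)]
          exact hdi
        have cu' : (InvSet (sw i * (sw (i+1) * w))).ncard
            = (InvSet (sw (i+1) * (sw i * (sw (i+1) * w)))).ncard + 1 :=
          ncard_swap_mul_of_gt hfm2 d2'
        -- the two bottom permutations agree
        have hu' : sw (i+1) * (sw i * (sw (i+1) * w)) = sw i * (sw (i+1) * (sw i * w)) := by
          simp only [← mul_assoc]
          rw [← sw_braid]
        -- reduced words for sw i * w and sw (i+1) * w
        have red_c1 : IsReducedWord (sw i * w) ((i+1) :: i :: u0) := by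
          constructor
          · rw [wprod_eq, wprod_cons, wprod_cons, hu0p, swap_mul_cancel,
              swap_mul_cancel]
          · simp only [List.length_cons, len_eq]
            omega
        have red_c2 : IsReducedWord (sw (i+1) * w) (i :: (i+1) :: u0) := by
          constructor
          · rw [wprod_eq, wprod_cons, wprod_cons, hu0p, ← hu',
              swap_mul_cancel, swap_mul_cancel]
          · rw [hu'] at cu'
            simp only [List.length_cons, len_eq]
            omega
        have e1 := IH a'.length (by omega) (sw i * w) a' ((i+1) :: i :: u0) ha' red_c1 rfl φ
        have e2 := IH b'.length (by omega) (sw (i+1) * w) b' (i :: (i+1) :: u0) hb' red_c2 rfl φ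
        simp only [List.foldr_cons] at e1 e2 ⊢
        rw [e1, e2]
        exact Dk_braid i (u0.foldr Dk φ)
      · -- far case : i + 1 < j
        have hj2 : i + 1 < j := by omega
        have dja : (sw i * w)⁻¹ (j+1) < (sw i * w)⁻¹ j := by
          simp only [inv_swap_mul_apply]
          rw [sw_apply_of_gt (i := i) (x := j+1) (by omega),
            sw_apply_of_gt (i := i) (x := j) (by omega)]
          exact hdj
        have dib : (sw j * w)⁻¹ (i+1) < (sw j * w)⁻¹ i := by
          simp only [inv_swap_mul_apply]
          rw [sw_apply_of_lt (i := j) (x := i+1) (by omega),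
            sw_apply_of_lt (i := j) (x := i) (by omega)]
          exact hdi
        have hfu : (InvSet (sw j * (sw i * w))).Finite :=
          invSet_swap_mul_finite _ hfina
        have cu : (InvSet (sw i * w)).ncard = (InvSet (sw j * (sw i * w))).ncard + 1 :=
          ncard_swap_mul_of_gt hfina dja
        have cu' : (InvSet (sw j * w)).ncard = (InvSet (sw i * (sw j * w))).ncard + 1 :=
          ncard_swap_mul_of_gt hfinb dib
        have hcommw : sw i * (sw j * w) = sw j * (sw i * w) := by
          simp only [← mul_assoc]
          rw [sw_comm hj2]
        obtain ⟨u0, hu0p, hu0l⟩ := exists_reduced_word hfu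
        have red_c1 : IsReducedWord (sw i * w) (j :: u0) := by
          constructor
          · rw [wprod_eq, wprod_cons, hu0p, swap_mul_cancel]
          · simp only [List.length_cons, len_eq]
            omega
        have red_c2 : IsReducedWord (sw j * w) (i :: u0) := by
          constructor
          · rw [wprod_eq, wprod_cons, hu0p, ← hcommw, swap_mul_cancel]
          · rw [hcommw] at cu'
            simp only [List.length_cons, len_eq]
            omega
        have e1 := IH a'.length (by omega) (sw i * w) a' (j :: u0) ha' red_c1 rfl φ
        have e2 := IH b'.length (by omega) (sw j * w) b' (i :: u0) hb' red_c2 rfl φ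
        simp only [List.foldr_cons] at e1 e2 ⊢
        rw [e1, e2]
        exact Dk_comm hj2 (u0.foldr Dk φ)
    intro w a b ha hb hlen φ
    have hlb : b.length = a.length := by
      have h1 := ha.2; have h2 := hb.2; omega
    cases a with
    | nil =>
      cases b with
      | nil => rfl
      | cons j b' => simp at hlb
    | cons i a' =>
      cases b with
      | nil => simp at hlb
      | cons j b' =>
        rcases lt_trichotomy i j with h | h | h
        · exact main w i a' j b' ha hb hlen h φ
        · subst h
          obtain ⟨ha', -, -, -⟩ := peel ha
          obtain ⟨hb', -, -, -⟩ := peel hb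
          have heq := IH a'.length (by simp only [List.length_cons] at hlen; omega)
            (sw i * w) a' b' ha' hb' rfl φ
          simp only [List.foldr_cons]
          rw [heq]
        · exact (main w j b' i a' hb ha (hlb.symm ▸ hlen) h φ).symm

/-! ### transfer to the polynomial ring -/

lemma ι_divDiff (i : ℕ) (f : PolyRing) : ι (divDiff i f) = Dk i (ι f) := by
  have h := divDiff_spec i f
  have h2 : (ι (X i) - ι (X (i+1))) * ι (divDiff i f) = ι f - σ i (ι f) := by
    rw [← map_sub, ← map_mul, h, map_sub, σ_ι]
  rw [Dk, ← h2, mul_div_cancel_left₀ _ (ι_X_sub_ne (by omega))]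

lemma ι_foldr (a : List ℕ) (f : PolyRing) :
    ι (divDiffWord a f) = a.foldr Dk (ι f) := by
  induction a with
  | nil => rfl
  | cons i a IHa =>
    show ι (divDiff i (divDiffWord a f)) = Dk i (a.foldr Dk (ι f))
    rw [ι_divDiff, IHa]

end DDAux


/-- If `s_{a₁} ⋯ s_{a_k}` and `s_{b₁} ⋯ s_{b_k}` are two reduced words for the
same permutation `w`, then the composed operators `∂_{a₁} ∘ ⋯ ∘ ∂_{a_k}` and
`∂_{b₁} ∘ ⋯ ∘ ∂_{b_k}` agree on every polynomial in ℤ[x₁,x₂,…]; hence `∂_w` is well defined,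
independent of the chosen reduced word. -/
theorem divDiffWord_well_defined (w : Equiv.Perm ℕ) (a b : List ℕ)
    (ha : IsReducedWord w a) (hb : IsReducedWord w b) (f : PolyRing) :
    divDiffWord a f = divDiffWord b f := by
  apply DDAux.ι_inj
  rw [DDAux.ι_foldr, DDAux.ι_foldr]
  exact DDAux.foldr_eq a.length w a b ha hb rfl (DDAux.ι f)
end

section
/- For every w in S_∞ and every i ≥ 1: if ℓ(w s_i) < ℓ(w) then ∂_i 𝔖_w = 𝔖_{w s_i}, and if ℓ(w s_i) > ℓ(w) then ∂_i 𝔖_w = 0. -/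
open MvPolynomial
open scoped Classical

/-- The longest element `w₀` of `S_n` (reversing the first `n` positions, with positions
indexed by `ℕ` starting at `0`). -/
def wZero (n : ℕ) : Equiv.Perm ℕ :=
  Function.Involutive.toPerm (fun i => if i < n then n - 1 - i else i) (by
    intro i
    dsimp only
    split_ifs <;> omega)

/-- The staircase monomial `x₁^{n-1} x₂^{n-2} ⋯ x_{n-1}`, the Schubert polynomial of `w₀`. -/
noncomputable def staircase (n : ℕ) : PolyRing :=
  ∏ i ∈ Finset.range n, X i ^ (n - 1 - i)

/-- The Schubert polynomial of `w` computed inside `S_n`: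
`𝔖_w = ∂_{a₁} ∂_{a₂} ⋯ ∂_{a_k} 𝔖_{w₀}` for a reduced word `w⁻¹ w₀ = s_{a₁} s_{a₂} ⋯ s_{a_k}`
(any choice of reduced word gives the same answer). -/
noncomputable def schubertIn (n : ℕ) (w : Equiv.Perm ℕ) : PolyRing :=
  if h : ∃ a : List ℕ, IsReducedWord (w⁻¹ * wZero n) a then divDiffWord h.choose (staircase n)
  else 0

/-- The Schubert polynomial `𝔖_w` of a finitely supported permutation `w ∈ S_∞`, computed
inside any `S_n` containing `w` (independent of all choices). -/
noncomputable def schubert (w : Equiv.Perm ℕ) : PolyRing :=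
  if h : ∃ n : ℕ, ∀ i, w i ≠ i → i < n then schubertIn h.choose w else 0

/-! ### sAct basics -/

lemma sAct_add (i : ℕ) (f g : PolyRing) : sAct i (f + g) = sAct i f + sAct i g := map_add _ _ _
lemma sAct_sub (i : ℕ) (f g : PolyRing) : sAct i (f - g) = sAct i f - sAct i g := map_sub _ _ _
lemma sAct_mul (i : ℕ) (f g : PolyRing) : sAct i (f * g) = sAct i f * sAct i g := map_mul _ _ _
lemma sAct_pow (i : ℕ) (f : PolyRing) (n : ℕ) : sAct i (f ^ n) = sAct i f ^ n := map_pow _ _ _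
lemma sAct_X (i j : ℕ) : sAct i (X j) = X (Equiv.swap i (i+1) j) := rename_X _ _

lemma sAct_X_self (i : ℕ) : sAct i (X i) = X (i+1) := by
  rw [sAct_X, Equiv.swap_apply_left]

lemma sAct_X_succ (i : ℕ) : sAct i (X (i+1)) = X i := by
  rw [sAct_X, Equiv.swap_apply_right]

lemma sAct_X_of_ne (i j : ℕ) (h1 : j ≠ i) (h2 : j ≠ i + 1) : sAct i (X j) = X j := by
  rw [sAct_X, Equiv.swap_apply_of_ne_of_ne h1 h2]

lemma sAct_sAct (i : ℕ) (f : PolyRing) : sAct i (sAct i f) = f := by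
  have hfun : (⇑(Equiv.swap i (i+1)) ∘ ⇑(Equiv.swap i (i+1))) = id := by
    funext x; simp [Equiv.swap_apply_self]
  rw [sAct, sAct, rename_rename, hfun, rename_id_apply]

/-! ### divDiff basics -/

lemma exists_divDiff (i : ℕ) (f : PolyRing) :
    ∃ g : PolyRing, (X i - X (i + 1)) * g = f - sAct i f := by
  induction f using MvPolynomial.induction_on with
  | C a => exact ⟨0, by simp [sAct, rename_C]⟩
  | add p q hp hq =>
    obtain ⟨g1, h1⟩ := hp; obtain ⟨g2, h2⟩ := hq
    exact ⟨g1 + g2, by rw [mul_add, h1, h2, sAct_add]; ring⟩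
  | mul_X p n hp =>
    obtain ⟨g, hg⟩ := hp
    rcases eq_or_ne n i with rfl | hni
    · exact ⟨g * X n + sAct n p, by
        rw [sAct_mul, sAct_X_self]; linear_combination X n * hg⟩
    · rcases eq_or_ne n (i+1) with rfl | hni1
      · exact ⟨g * X (i+1) - sAct i p, by
          rw [sAct_mul, sAct_X_succ]; linear_combination X (i+1) * hg⟩
      · exact ⟨g * X n, by
          rw [sAct_mul, sAct_X_of_ne i n hni hni1]; linear_combination X n * hg⟩

lemma X_sub_X_ne' {i j : ℕ} (h : i ≠ j) : (X i - X j : PolyRing) ≠ 0 := by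
  intro hh
  have h2 : (X i : PolyRing) = X j := by linear_combination hh
  have := congrArg (eval (fun k => if k = i then (1:ℤ) else 0)) h2
  simp [h.symm] at this

lemma X_sub_X_ne (i : ℕ) : (X i - X (i+1) : PolyRing) ≠ 0 := X_sub_X_ne' (by omega)

lemma divDiff_spec (i : ℕ) (f : PolyRing) :
    (X i - X (i + 1)) * divDiff i f = f - sAct i f := by
  rw [divDiff, dif_pos (exists_divDiff i f)]
  exact (exists_divDiff i f).choose_spec

lemma divDiff_unique {i : ℕ} {f g : PolyRing}
    (h : (X i - X (i + 1)) * g = f - sAct i f) : divDiff i f = g :=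
  mul_left_cancel₀ (X_sub_X_ne i) ((divDiff_spec i f).trans h.symm)

lemma sAct_divDiff (i : ℕ) (f : PolyRing) : sAct i (divDiff i f) = divDiff i f := by
  have h := congrArg (sAct i) (divDiff_spec i f)
  simp only [sAct_mul, sAct_sub, sAct_X_self, sAct_X_succ, sAct_sAct] at h
  have h2 : (X i - X (i+1)) * sAct i (divDiff i f) = f - sAct i f := by
    linear_combination -h
  exact (divDiff_unique h2).symm

lemma divDiff_divDiff (i : ℕ) (f : PolyRing) : divDiff i (divDiff i f) = 0 :=
  divDiff_unique (by rw [sAct_divDiff]; ring)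

lemma divDiff_invariant {i : ℕ} {f : PolyRing} (h : sAct i f = f) : divDiff i f = 0 :=
  divDiff_unique (by rw [h]; ring)

lemma divDiff_mul_invariant {i : ℕ} {m : PolyRing} (hm : sAct i m = m) (g : PolyRing) :
    divDiff i (m * g) = m * divDiff i g :=
  divDiff_unique (by rw [sAct_mul, hm]; linear_combination m * divDiff_spec i g)

/-! ### commutation -/

lemma sAct_sAct_comm {i j : ℕ} (h : i + 1 < j ∨ j + 1 < i) (f : PolyRing) :
    sAct i (sAct j f) = sAct j (sAct i f) := by
  have hfun : (⇑(Equiv.swap i (i+1)) ∘ ⇑(Equiv.swap j (j+1)))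
      = (⇑(Equiv.swap j (j+1)) ∘ ⇑(Equiv.swap i (i+1))) := by
    funext x
    simp only [Function.comp_apply, Equiv.swap_apply_def]
    split_ifs <;> omega
  rw [sAct, sAct, sAct, sAct, rename_rename, rename_rename, hfun]

lemma divDiff_comm {i j : ℕ} (h : i + 1 < j ∨ j + 1 < i) (f : PolyRing) :
    divDiff i (divDiff j f) = divDiff j (divDiff i f) := by
  have hXij : sAct i (X j) = X j := sAct_X_of_ne _ _ (by omega) (by omega)
  have hXij1 : sAct i (X (j+1)) = X (j+1) := sAct_X_of_ne _ _ (by omega) (by omega)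
  have hXji : sAct j (X i) = X i := sAct_X_of_ne _ _ (by omega) (by omega)
  have hXji1 : sAct j (X (i+1)) = X (i+1) := sAct_X_of_ne _ _ (by omega) (by omega)
  have h1 : (X i - X (i+1)) * ((X j - X (j+1)) * divDiff i (divDiff j f)) =
      f - sAct j f - sAct i f + sAct i (sAct j f) := by
    have E1 : (X j - X (j+1)) * divDiff j f = f - sAct j f := divDiff_spec j f
    have E2 : (X i - X (i+1)) * divDiff i (divDiff j f)
        = divDiff j f - sAct i (divDiff j f) := divDiff_spec i (divDiff j f)
    have E1u := congrArg (sAct i) E1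
    simp only [sAct_mul, sAct_sub, hXij, hXij1] at E1u
    linear_combination (X j - X (j+1)) * E2 + E1 - E1u
  have h3 : (X i - X (i+1)) * ((X j - X (j+1)) * divDiff j (divDiff i f)) =
      f - sAct j f - sAct i f + sAct i (sAct j f) := by
    have E1 : (X i - X (i+1)) * divDiff i f = f - sAct i f := divDiff_spec i f
    have E2 : (X j - X (j+1)) * divDiff j (divDiff i f)
        = divDiff i f - sAct j (divDiff i f) := divDiff_spec j (divDiff i f)
    have E1v := congrArg (sAct j) E1
    simp only [sAct_mul, sAct_sub, hXji, hXji1] at E1v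
    rw [sAct_sAct_comm h]
    linear_combination (X i - X (i+1)) * E2 + E1 - E1v
  have hAB : (X i - X (i+1) : PolyRing) * (X j - X (j+1)) ≠ 0 :=
    mul_ne_zero (X_sub_X_ne i) (X_sub_X_ne j)
  apply mul_left_cancel₀ hAB
  linear_combination h1 - h3

/-! ### braid relation -/

lemma rename_perm_mul (u v : Equiv.Perm ℕ) (f : PolyRing) :
    rename ⇑u (rename ⇑v f) = rename ⇑(u * v) f := by
  rw [rename_rename, ← Equiv.Perm.coe_mul]

lemma swap_braid_perm (i : ℕ) :
    Equiv.swap i (i+1) * (Equiv.swap (i+1) (i+2) * Equiv.swap i (i+1))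
      = Equiv.swap (i+1) (i+2) * (Equiv.swap i (i+1) * Equiv.swap (i+1) (i+2)) := by
  have h1 : Equiv.swap (i+1) (i+2) * Equiv.swap i (i+1) * Equiv.swap (i+1) (i+2)
      = Equiv.swap (i+2) i :=
    Equiv.swap_mul_swap_mul_swap (by omega) (by omega)
  have h2 : Equiv.swap i (i+1) * Equiv.swap (i+2) i * Equiv.swap i (i+1)
      = Equiv.swap (i+1) (i+2) :=
    Equiv.swap_mul_swap_mul_swap (by omega) (by omega)
  rw [← h1] at h2
  have h4 := congrArg
    (fun x => Equiv.swap i (i+1) * x * Equiv.swap i (i+1)) h2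
  simp only [← mul_assoc] at h4
  simp only [Equiv.swap_mul_self, one_mul, Equiv.mul_swap_mul_self] at h4
  simp only [← mul_assoc]
  rw [← h4]

lemma sAct_braid (i : ℕ) (f : PolyRing) :
    sAct i (sAct (i+1) (sAct i f)) = sAct (i+1) (sAct i (sAct (i+1) f)) := by
  simp only [sAct, show i+1+1 = i+2 from rfl, rename_perm_mul]
  rw [show Equiv.swap i (i+1) * (Equiv.swap (i+1) (i+2) * Equiv.swap i (i+1))
      = Equiv.swap (i+1) (i+2) * (Equiv.swap i (i+1) * Equiv.swap (i+1) (i+2))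
      from swap_braid_perm i]

lemma divDiff_braid (i : ℕ) (f : PolyRing) :
    divDiff i (divDiff (i+1) (divDiff i f)) = divDiff (i+1) (divDiff i (divDiff (i+1) f)) := by
  have huA : sAct i (X i) = X (i+1) := sAct_X_self i
  have huB : sAct i (X (i+1)) = X i := sAct_X_succ i
  have huC : sAct i (X (i+2)) = X (i+2) := sAct_X_of_ne _ _ (by omega) (by omega)
  have hvA : sAct (i+1) (X (i+1)) = X (i+2) := sAct_X_self (i+1)
  have hvB : sAct (i+1) (X (i+2)) = X (i+1) := sAct_X_succ (i+1)
  have hvC : sAct (i+1) (X i) = X i := sAct_X_of_ne _ _ (by omega) (by omega)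
  have key1 : (X i - X (i+1)) * ((X (i+1) - X (i+2)) * ((X i - X (i+2)) *
        divDiff i (divDiff (i+1) (divDiff i f)))) =
      f - sAct i f - sAct (i+1) f + sAct i (sAct (i+1) f) + sAct (i+1) (sAct i f)
        - sAct i (sAct (i+1) (sAct i f)) := by
    have E1 : (X i - X (i+1)) * divDiff i f = f - sAct i f := divDiff_spec i f
    have E2 : (X (i+1) - X (i+1+1)) * divDiff (i+1) (divDiff i f)
        = divDiff i f - sAct (i+1) (divDiff i f) := divDiff_spec (i+1) (divDiff i f)
    have E3 : (X i - X (i+1)) * divDiff i (divDiff (i+1) (divDiff i f))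
        = divDiff (i+1) (divDiff i f) - sAct i (divDiff (i+1) (divDiff i f)) :=
      divDiff_spec i (divDiff (i+1) (divDiff i f))
    have hug1 : sAct i (divDiff i f) = divDiff i f := sAct_divDiff i f
    have E2u := congrArg (sAct i) E2
    simp only [sAct_mul, sAct_sub, huA, huB, huC, hug1, show i+1+1 = i+2 from rfl] at E2u E2
    have E1v := congrArg (sAct (i+1)) E1
    simp only [sAct_mul, sAct_sub, hvA, hvB, hvC] at E1v
    have E1uv := congrArg (sAct i) E1v
    simp only [sAct_mul, sAct_sub, huA, huB, huC] at E1uv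
    linear_combination ((X (i+1) - X (i+2)) * (X i - X (i+2))) * E3
      + (X i - X (i+2)) * E2 - (X (i+1) - X (i+2)) * E2u + E1 - E1v + E1uv
  have key2 : (X i - X (i+1)) * ((X (i+1) - X (i+2)) * ((X i - X (i+2)) *
        divDiff (i+1) (divDiff i (divDiff (i+1) f)))) =
      f - sAct (i+1) f - sAct i f + sAct (i+1) (sAct i f) + sAct i (sAct (i+1) f)
        - sAct (i+1) (sAct i (sAct (i+1) f)) := by
    have E1 : (X (i+1) - X (i+1+1)) * divDiff (i+1) f = f - sAct (i+1) f :=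
      divDiff_spec (i+1) f
    have E2 : (X i - X (i+1)) * divDiff i (divDiff (i+1) f)
        = divDiff (i+1) f - sAct i (divDiff (i+1) f) := divDiff_spec i (divDiff (i+1) f)
    have E3 : (X (i+1) - X (i+1+1)) * divDiff (i+1) (divDiff i (divDiff (i+1) f))
        = divDiff i (divDiff (i+1) f) - sAct (i+1) (divDiff i (divDiff (i+1) f)) :=
      divDiff_spec (i+1) (divDiff i (divDiff (i+1) f))
    have hvg1 : sAct (i+1) (divDiff (i+1) f) = divDiff (i+1) f := sAct_divDiff (i+1) f
    have E2v := congrArg (sAct (i+1)) E2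
    simp only [sAct_mul, sAct_sub, hvA, hvB, hvC, hvg1, show i+1+1 = i+2 from rfl]
      at E2v E1 E3
    have E1u := congrArg (sAct i) E1
    simp only [sAct_mul, sAct_sub, huA, huB, huC] at E1u
    have E1vu := congrArg (sAct (i+1)) E1u
    simp only [sAct_mul, sAct_sub, hvA, hvB, hvC] at E1vu
    linear_combination ((X i - X (i+1)) * (X i - X (i+2))) * E3
      + (X i - X (i+2)) * E2 - (X i - X (i+1)) * E2v + E1 - E1u + E1vu
  have hABC : (X i - X (i+1) : PolyRing) * ((X (i+1) - X (i+2)) * (X i - X (i+2))) ≠ 0 :=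
    mul_ne_zero (X_sub_X_ne i)
      (mul_ne_zero (X_sub_X_ne' (by omega)) (X_sub_X_ne' (by omega)))
  apply mul_left_cancel₀ hABC
  have hb := sAct_braid i f
  linear_combination key1 - key2 - hb



/-- inversion set -/
def invSet (w : Equiv.Perm ℕ) : Set (ℕ × ℕ) := {p : ℕ × ℕ | p.1 < p.2 ∧ w p.2 < w p.1}

lemma len_def (w : Equiv.Perm ℕ) : len w = (invSet w).ncard := rfl

def FinSupp (w : Equiv.Perm ℕ) : Prop := {i : ℕ | w i ≠ i}.Finite

lemma finSupp_one : FinSupp 1 := by simp [FinSupp]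

lemma finSupp_mul {u v : Equiv.Perm ℕ} (hu : FinSupp u) (hv : FinSupp v) :
    FinSupp (u * v) := by
  apply Set.Finite.subset (hu.union hv)
  intro j hj
  by_cases h : v j = j
  · exact Or.inl (by simpa [Equiv.Perm.mul_apply, h] using hj)
  · exact Or.inr h

lemma finSupp_inv {u : Equiv.Perm ℕ} (hu : FinSupp u) : FinSupp u⁻¹ := by
  have hset : {i : ℕ | u⁻¹ i ≠ i} = {i : ℕ | u i ≠ i} := by
    ext i
    simp only [Set.mem_setOf_eq, ne_eq, not_iff_not]
    constructor
    · intro h; conv_lhs => rw [← h]; simp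
    · intro h; conv_lhs => rw [← h]; simp
  unfold FinSupp
  rw [hset]
  exact hu

lemma finSupp_swap (i : ℕ) : FinSupp (Equiv.swap i (i+1)) := by
  apply Set.Finite.subset (Set.finite_Iio (i+2))
  intro j hj
  simp only [Set.mem_setOf_eq, Equiv.swap_apply_def] at hj
  simp only [Set.mem_Iio]
  split_ifs at hj <;> omega

lemma finSupp_bound {w : Equiv.Perm ℕ} (hw : FinSupp w) : ∃ n, ∀ i, w i ≠ i → i < n := by
  obtain ⟨n, hn⟩ := hw.bddAbove
  exact ⟨n + 1, fun i hi => Nat.lt_succ_of_le (hn hi)⟩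

lemma fix_of_ge {w : Equiv.Perm ℕ} {n : ℕ} (hb : ∀ i, w i ≠ i → i < n) {j : ℕ}
    (hj : n ≤ j) : w j = j := by
  by_contra h
  exact absurd (hb j h) (by omega)

lemma maps_lt {w : Equiv.Perm ℕ} {n : ℕ} (hb : ∀ i, w i ≠ i → i < n) {j : ℕ}
    (hj : j < n) : w j < n := by
  by_contra h
  have h1 : w (w j) = w j := fix_of_ge hb (by omega)
  have := w.injective h1
  omega

lemma invSet_finite {w : Equiv.Perm ℕ} (hw : FinSupp w) : (invSet w).Finite := by
  obtain ⟨n, hb⟩ := finSupp_bound hw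
  apply Set.Finite.subset ((Set.finite_Iio n).prod (Set.finite_Iio n))
  rintro ⟨a, b⟩ ⟨hab, hba⟩
  dsimp only at hab hba
  simp only [Set.mem_prod, Set.mem_Iio]
  by_cases hbn : b < n
  · exact ⟨by omega, hbn⟩
  · exfalso
    have hwb : w b = b := fix_of_ge hb (by omega)
    by_cases han : a < n
    · have := maps_lt hb han; omega
    · have hwa : w a = a := fix_of_ge hb (by omega); omega

/-! ### length under right multiplication by a simple transposition -/

lemma swap_lt {i a b : ℕ} (hab : a < b) (hne : ¬(a = i ∧ b = i+1)) :
    Equiv.swap i (i+1) a < Equiv.swap i (i+1) b := by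
  simp only [Equiv.swap_apply_def]
  split_ifs <;> omega

lemma invSet_swap_dir (w : Equiv.Perm ℕ) (i : ℕ) :
    (fun p : ℕ × ℕ => (Equiv.swap i (i+1) p.1, Equiv.swap i (i+1) p.2)) ''
      (invSet (w * Equiv.swap i (i+1)) \ {(i, i+1)}) ⊆ invSet w \ {(i, i+1)} := by
  rintro q ⟨⟨c, d⟩, hq, rfl⟩
  rw [Set.mem_diff, Set.mem_singleton_iff] at hq ⊢
  obtain ⟨⟨hcd, hdc⟩, hne⟩ := hq
  dsimp only at hcd hdc ⊢
  rw [Prod.ext_iff] at hne ⊢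
  dsimp only at hne ⊢
  push_neg at hne
  have hne' : ¬(c = i ∧ d = i+1) := by
    rintro ⟨rfl, rfl⟩
    exact (hne rfl) rfl
  refine ⟨⟨swap_lt hcd hne', ?_⟩, ?_⟩
  · have e1 : w (Equiv.swap i (i+1) d) = (w * Equiv.swap i (i+1)) d := rfl
    have e2 : w (Equiv.swap i (i+1) c) = (w * Equiv.swap i (i+1)) c := rfl
    rw [e1, e2]
    exact hdc
  · rintro ⟨h1, h2⟩
    have ha : c = i + 1 := by
      have := congrArg (Equiv.swap i (i+1)) h1
      simpa [Equiv.swap_apply_self] using this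
    have hb : d = i := by
      have := congrArg (Equiv.swap i (i+1)) h2
      simpa [Equiv.swap_apply_self] using this
    omega

lemma invSet_mul_swap_sdiff (w : Equiv.Perm ℕ) (i : ℕ) :
    invSet w \ {(i, i+1)} =
      (fun p : ℕ × ℕ => (Equiv.swap i (i+1) p.1, Equiv.swap i (i+1) p.2)) ''
        (invSet (w * Equiv.swap i (i+1)) \ {(i, i+1)}) := by
  apply Set.Subset.antisymm _ (invSet_swap_dir w i)
  have h2 := invSet_swap_dir (w * Equiv.swap i (i+1)) i
  rw [show w * Equiv.swap i (i+1) * Equiv.swap i (i+1) = w by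
    rw [mul_assoc, Equiv.swap_mul_self, mul_one]] at h2
  intro q hq
  have himg : (fun p : ℕ × ℕ => (Equiv.swap i (i+1) p.1, Equiv.swap i (i+1) p.2)) q
      ∈ invSet (w * Equiv.swap i (i+1)) \ {(i, i+1)} := h2 ⟨q, hq, rfl⟩
  exact ⟨_, himg, by simp [Equiv.swap_apply_self]⟩

lemma ncard_invSet_sdiff (w : Equiv.Perm ℕ) (i : ℕ) :
    (invSet w \ {(i, i+1)}).ncard = (invSet (w * Equiv.swap i (i+1)) \ {(i, i+1)}).ncard := by
  rw [invSet_mul_swap_sdiff w i]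
  apply Set.ncard_image_of_injective
  intro p q h
  simp only [Prod.ext_iff] at h ⊢
  exact ⟨(Equiv.swap i (i+1)).injective h.1, (Equiv.swap i (i+1)).injective h.2⟩

lemma len_mul_swap_gt {w : Equiv.Perm ℕ} (hw : FinSupp w) {i : ℕ} (h : w i < w (i+1)) :
    len (w * Equiv.swap i (i+1)) = len w + 1 := by
  have hmem : (i, i+1) ∈ invSet (w * Equiv.swap i (i+1)) := by
    simp [invSet, Equiv.Perm.mul_apply, h]
  have hnmem : (i, i+1) ∉ invSet w := by
    simp only [invSet, Set.mem_setOf_eq, not_and]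
    omega
  have hfin : (invSet (w * Equiv.swap i (i+1))).Finite :=
    invSet_finite (finSupp_mul hw (finSupp_swap i))
  calc len (w * Equiv.swap i (i+1))
      = (insert (i, i+1) (invSet (w * Equiv.swap i (i+1)) \ {(i, i+1)})).ncard := by
        rw [len_def, Set.insert_diff_singleton, Set.insert_eq_of_mem hmem]
    _ = (invSet (w * Equiv.swap i (i+1)) \ {(i, i+1)}).ncard + 1 :=
        Set.ncard_insert_of_notMem (by simp) hfin.diff
    _ = (invSet w \ {(i, i+1)}).ncard + 1 := by rw [← ncard_invSet_sdiff]
    _ = (invSet w).ncard + 1 := by rw [Set.diff_singleton_eq_self hnmem]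
    _ = len w + 1 := rfl

lemma len_mul_swap_lt {w : Equiv.Perm ℕ} (hw : FinSupp w) {i : ℕ} (h : w (i+1) < w i) :
    len (w * Equiv.swap i (i+1)) + 1 = len w := by
  have h2 : (w * Equiv.swap i (i+1)) i < (w * Equiv.swap i (i+1)) (i+1) := by
    simpa [Equiv.Perm.mul_apply] using h
  have := len_mul_swap_gt (finSupp_mul hw (finSupp_swap i)) h2
  simp only [mul_assoc, Equiv.swap_mul_self, mul_one] at this
  omega

/-! ### len inverse -/

lemma invSet_inv (w : Equiv.Perm ℕ) :
    invSet w⁻¹ = (fun p : ℕ × ℕ => (w p.2, w p.1)) '' invSet w := by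
  ext ⟨a, b⟩
  simp only [invSet, Set.mem_setOf_eq, Set.mem_image, Prod.ext_iff]
  constructor
  · rintro ⟨hab, hba⟩
    exact ⟨(w⁻¹ b, w⁻¹ a), ⟨hba, by simpa using hab⟩, by simp, by simp⟩
  · rintro ⟨⟨c, d⟩, ⟨hcd, hdc⟩, rfl, rfl⟩
    exact ⟨hdc, by simpa using hcd⟩

lemma len_inv (w : Equiv.Perm ℕ) : len w⁻¹ = len w := by
  rw [len_def, len_def, invSet_inv]
  apply Set.ncard_image_of_injective
  intro p q h
  simp only [Prod.ext_iff] at h ⊢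
  exact ⟨w.injective h.2, w.injective h.1⟩

/-! ### left multiplication -/

lemma len_swap_mul_lt {w : Equiv.Perm ℕ} (hw : FinSupp w) {i : ℕ}
    (h : w⁻¹ (i+1) < w⁻¹ i) : len (Equiv.swap i (i+1) * w) + 1 = len w := by
  have : len (w⁻¹ * Equiv.swap i (i+1)) + 1 = len w⁻¹ := len_mul_swap_lt (finSupp_inv hw) h
  rw [← len_inv (Equiv.swap i (i+1) * w)]
  simpa [mul_inv_rev, Equiv.swap_inv, len_inv] using this

lemma len_swap_mul_gt {w : Equiv.Perm ℕ} (hw : FinSupp w) {i : ℕ}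
    (h : w⁻¹ i < w⁻¹ (i+1)) : len (Equiv.swap i (i+1) * w) = len w + 1 := by
  have : len (w⁻¹ * Equiv.swap i (i+1)) = len w⁻¹ + 1 := len_mul_swap_gt (finSupp_inv hw) h
  rw [← len_inv (Equiv.swap i (i+1) * w)]
  simpa [mul_inv_rev, Equiv.swap_inv, len_inv] using this

/-! ### identity and descents -/

lemma len_one : len (1 : Equiv.Perm ℕ) = 0 := by
  have h : invSet (1 : Equiv.Perm ℕ) = ∅ := by
    ext ⟨a, b⟩
    simp only [invSet, Set.mem_setOf_eq, Equiv.Perm.one_apply, Set.mem_empty_iff_false,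
      iff_false, not_and]
    omega
  rw [len_def, h, Set.ncard_empty]

lemma eq_one_of_no_descent {w : Equiv.Perm ℕ} (h : ∀ i, w i < w (i+1)) : w = 1 := by
  have hsm : StrictMono w := strictMono_nat_of_lt_succ h
  have hall : ∀ m, w m = m := by
    intro m
    induction m using Nat.strong_induction_on with
    | _ m ih =>
      have hge : m ≤ w m := hsm.le_apply
      rcases eq_or_lt_of_le hge with heq | hlt
      · omega
      · exfalso
        set j := w⁻¹ m with hj
        have hwj : w j = m := by simp [hj]
        rcases lt_trichotomy j m with h1 | h1 | h1
        · rw [ih j h1] at hwj; omega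
        · rw [h1] at hwj; omega
        · have := hsm h1; omega
  exact Equiv.ext hall

lemma exists_descent {w : Equiv.Perm ℕ} (hne : w ≠ 1) : ∃ i, w (i+1) < w i := by
  by_contra h
  push_neg at h
  apply hne
  apply eq_one_of_no_descent
  intro i
  have := h i
  have hne2 : w i ≠ w (i+1) := fun hh => by have := w.injective hh; omega
  omega

lemma len_eq_zero_iff {w : Equiv.Perm ℕ} (hw : FinSupp w) : len w = 0 ↔ w = 1 := by
  constructor
  · intro h
    by_contra hne
    obtain ⟨i, hi⟩ := exists_descent hne
    have hmem : (i, i+1) ∈ invSet w := ⟨by omega, hi⟩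
    have : (invSet w).ncard ≠ 0 :=
      Set.ncard_ne_zero_of_mem hmem (invSet_finite hw)
    exact this h
  · rintro rfl; exact len_one

/-! ### words -/

def wordProd (a : List ℕ) : Equiv.Perm ℕ := (a.map fun i => Equiv.swap i (i + 1)).prod

lemma wordProd_nil : wordProd [] = 1 := rfl

lemma wordProd_cons (i : ℕ) (a : List ℕ) :
    wordProd (i :: a) = Equiv.swap i (i+1) * wordProd a := by
  simp [wordProd]

lemma wordProd_append (a b : List ℕ) :
    wordProd (a ++ b) = wordProd a * wordProd b := by
  simp [wordProd]

lemma finSupp_wordProd (a : List ℕ) : FinSupp (wordProd a) := by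
  induction a with
  | nil => exact finSupp_one
  | cons i a ih => rw [wordProd_cons]; exact finSupp_mul (finSupp_swap i) ih

lemma len_wordProd_le (a : List ℕ) : len (wordProd a) ≤ a.length := by
  induction a with
  | nil => simp [wordProd_nil, len_one]
  | cons i a ih =>
    rw [wordProd_cons]
    simp only [List.length_cons]
    rcases lt_trichotomy ((wordProd a)⁻¹ i) ((wordProd a)⁻¹ (i+1)) with h | h | h
    · have := len_swap_mul_gt (finSupp_wordProd a) h
      omega
    · exfalso
      have := (wordProd a)⁻¹.injective h
      omega
    · have := len_swap_mul_lt (finSupp_wordProd a) h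
      omega

lemma exists_reducedWord {w : Equiv.Perm ℕ} (hw : FinSupp w) : ∃ a, IsReducedWord w a := by
  generalize hn : len w = n
  induction n using Nat.strong_induction_on generalizing w with
  | _ n ih =>
    rcases eq_or_ne w 1 with rfl | hne
    · exact ⟨[], rfl, by simp [len_one]⟩
    · obtain ⟨i, hi⟩ := exists_descent hne
      have hlt := len_mul_swap_lt hw hi
      have hfs : FinSupp (w * Equiv.swap i (i+1)) := finSupp_mul hw (finSupp_swap i)
      obtain ⟨a, ha1, ha2⟩ := ih (len (w * Equiv.swap i (i+1))) (by omega) hfs rfl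
      refine ⟨a ++ [i], ?_, ?_⟩
      · show wordProd (a ++ [i]) = w
        rw [wordProd_append, show wordProd [i] = Equiv.swap i (i+1) by simp [wordProd]]
        rw [show (a.map fun i => Equiv.swap i (i + 1)).prod = wordProd a from rfl] at ha1
        rw [ha1, mul_assoc, Equiv.swap_mul_self, mul_one]
      · simp only [List.length_append, List.length_singleton]
        omega

/-! ### Section 3: well-definedness -/

lemma divDiffWord_cons (i : ℕ) (a : List ℕ) (f : PolyRing) :
    divDiffWord (i :: a) f = divDiff i (divDiffWord a f) := rfl

lemma isReducedWord_iff (w : Equiv.Perm ℕ) (a : List ℕ) :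
    IsReducedWord w a ↔ wordProd a = w ∧ a.length = len w := Iff.rfl

lemma finSupp_of_reduced {w : Equiv.Perm ℕ} {a : List ℕ} (h : IsReducedWord w a) :
    FinSupp w := by
  rw [isReducedWord_iff] at h
  rw [← h.1]
  exact finSupp_wordProd a

lemma left_descent_lt {w : Equiv.Perm ℕ} (hw : FinSupp w) {i : ℕ}
    (h : w⁻¹ (i+1) < w⁻¹ i) : len (Equiv.swap i (i+1) * w) + 1 = len w :=
  len_swap_mul_lt hw h

lemma reduced_cons {w : Equiv.Perm ℕ} {i : ℕ} {a' : List ℕ}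
    (h : IsReducedWord w (i :: a')) :
    IsReducedWord (Equiv.swap i (i+1) * w) a' ∧ len (Equiv.swap i (i+1) * w) + 1 = len w := by
  rw [isReducedWord_iff] at h
  obtain ⟨hprod, hlen⟩ := h
  rw [wordProd_cons] at hprod
  have hw : FinSupp w := by
    rw [← hprod]; exact finSupp_mul (finSupp_swap i) (finSupp_wordProd a')
  have hsw : Equiv.swap i (i+1) * w = wordProd a' := by
    rw [← hprod, ← mul_assoc, Equiv.swap_mul_self, one_mul]
  have hle : len (Equiv.swap i (i+1) * w) ≤ a'.length := by
    rw [hsw]; exact len_wordProd_le a'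
  simp only [List.length_cons] at hlen
  rcases lt_trichotomy (w⁻¹ i) (w⁻¹ (i+1)) with hc | hc | hc
  · have := len_swap_mul_gt hw hc; omega
  · exfalso; have := w⁻¹.injective hc; omega
  · have hlt := len_swap_mul_lt hw hc
    exact ⟨⟨hsw.symm ▸ rfl, by omega⟩, hlt⟩

lemma descent_of_reduced_cons {w : Equiv.Perm ℕ} {i : ℕ} {a' : List ℕ}
    (h : IsReducedWord w (i :: a')) : w⁻¹ (i+1) < w⁻¹ i := by
  have hw : FinSupp w := finSupp_of_reduced h
  have h2 := (reduced_cons h).2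
  rcases lt_trichotomy (w⁻¹ i) (w⁻¹ (i+1)) with hc | hc | hc
  · have := len_swap_mul_gt hw hc; omega
  · exfalso; have := w⁻¹.injective hc; omega
  · exact hc

lemma swap_comm_far {i j : ℕ} (h : i + 1 < j ∨ j + 1 < i) :
    Equiv.swap i (i+1) * Equiv.swap j (j+1) = Equiv.swap j (j+1) * Equiv.swap i (i+1) := by
  ext x
  simp only [Equiv.Perm.mul_apply, Equiv.swap_apply_def]
  split_ifs <;> omega

lemma reduced_cons_of {v : Equiv.Perm ℕ} {c : List ℕ} (i : ℕ)
    (hc : IsReducedWord v c) (hlen : len (Equiv.swap i (i+1) * v) = len v + 1) :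
    IsReducedWord (Equiv.swap i (i+1) * v) (i :: c) := by
  rw [isReducedWord_iff] at hc ⊢
  constructor
  · rw [wordProd_cons, hc.1]
  · simp only [List.length_cons, hlen, hc.2]

lemma inv_swap_mul (k : ℕ) (w : Equiv.Perm ℕ) (x : ℕ) :
    (Equiv.swap k (k+1) * w)⁻¹ x = w⁻¹ (Equiv.swap k (k+1) x) := by
  rw [mul_inv_rev, Equiv.Perm.mul_apply, Equiv.swap_inv]

/-- The type of the inductive hypothesis in the well-definedness proof. -/
def IHtype (n : ℕ) : Prop := ∀ m, m < n → ∀ (a b : List ℕ) (w : Equiv.Perm ℕ),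
  a.length = m → IsReducedWord w a → IsReducedWord w b →
  ∀ f : PolyRing, divDiffWord a f = divDiffWord b f

lemma inv_mul_apply (u v : Equiv.Perm ℕ) (x : ℕ) : (u * v)⁻¹ x = v⁻¹ (u⁻¹ x) := by
  rw [mul_inv_rev, Equiv.Perm.mul_apply]

lemma far_case {n : ℕ} (ih : IHtype n) {i j : ℕ} (hfar : i + 1 < j ∨ j + 1 < i)
    {w : Equiv.Perm ℕ} {a' b' : List ℕ} (hn : a'.length + 1 = n)
    (ha' : IsReducedWord (Equiv.swap i (i+1) * w) a')
    (hb' : IsReducedWord (Equiv.swap j (j+1) * w) b')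
    (hlai : len (Equiv.swap i (i+1) * w) + 1 = len w)
    (hlbj : len (Equiv.swap j (j+1) * w) + 1 = len w)
    (hdj : w⁻¹ (j+1) < w⁻¹ j)
    (hw : FinSupp w) (f : PolyRing) :
    divDiff i (divDiffWord a' f) = divDiff j (divDiffWord b' f) := by
  set si := Equiv.swap i (i+1) with hsi
  set sj := Equiv.swap j (j+1) with hsj
  have hsis : si * si = 1 := Equiv.swap_mul_self _ _
  have hsjs : sj * sj = 1 := Equiv.swap_mul_self _ _
  have hcomm : si * sj = sj * si := swap_comm_far hfar
  have hwi : FinSupp (si * w) := finSupp_mul (finSupp_swap i) hw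
  have hdj2 : (si * w)⁻¹ (j+1) < (si * w)⁻¹ j := by
    rw [inv_mul_apply, inv_mul_apply]
    have e1 : si⁻¹ (j+1) = j+1 := by
      rw [hsi, Equiv.swap_inv,
        Equiv.swap_apply_of_ne_of_ne (show j+1 ≠ i by omega) (show j+1 ≠ i+1 by omega)]
    have e2 : si⁻¹ j = j := by
      rw [hsi, Equiv.swap_inv,
        Equiv.swap_apply_of_ne_of_ne (show j ≠ i by omega) (show j ≠ i+1 by omega)]
    rw [e1, e2]
    exact hdj
  set v := sj * (si * w) with hv
  have hlv : len v + 1 = len (si * w) := len_swap_mul_lt hwi hdj2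
  have hvfs : FinSupp v := finSupp_mul (finSupp_swap j) hwi
  obtain ⟨c, hc⟩ := exists_reducedWord hvfs
  have hjv : sj * v = si * w := by rw [hv, ← mul_assoc, hsjs, one_mul]
  have hjc : IsReducedWord (si * w) (j :: c) := by
    have := reduced_cons_of j hc (by rw [hjv]; omega)
    rwa [hjv] at this
  have hiv : si * v = sj * w := by
    rw [hv, ← mul_assoc, hcomm, mul_assoc, ← mul_assoc si si w, hsis, one_mul]
  have hic : IsReducedWord (sj * w) (i :: c) := by
    have := reduced_cons_of i hc (by rw [hiv]; omega)
    rwa [hiv] at this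
  have hlb' : b'.length < n := by
    have h1 := hb'.2; have h2 := ha'.2; omega
  calc divDiff i (divDiffWord a' f)
      = divDiff i (divDiffWord (j :: c) f) := by
        rw [ih a'.length (by omega) a' (j :: c) (si * w) rfl ha' hjc f]
    _ = divDiff i (divDiff j (divDiffWord c f)) := by rw [divDiffWord_cons]
    _ = divDiff j (divDiff i (divDiffWord c f)) := divDiff_comm hfar _
    _ = divDiff j (divDiffWord (i :: c) f) := by rw [divDiffWord_cons]
    _ = divDiff j (divDiffWord b' f) := by
        rw [ih b'.length hlb' b' (i :: c) (sj * w) rfl hb' hic f]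

lemma near_case {n : ℕ} (ih : IHtype n) {i : ℕ}
    {w : Equiv.Perm ℕ} {a' b' : List ℕ} (hn : a'.length + 1 = n)
    (ha' : IsReducedWord (Equiv.swap i (i+1) * w) a')
    (hb' : IsReducedWord (Equiv.swap (i+1) (i+2) * w) b')
    (hlai : len (Equiv.swap i (i+1) * w) + 1 = len w)
    (hlbj : len (Equiv.swap (i+1) (i+2) * w) + 1 = len w)
    (hdi : w⁻¹ (i+1) < w⁻¹ i)
    (hdj : w⁻¹ (i+2) < w⁻¹ (i+1))
    (hw : FinSupp w) (f : PolyRing) :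
    divDiff i (divDiffWord a' f) = divDiff (i+1) (divDiffWord b' f) := by
  set si := Equiv.swap i (i+1) with hsi
  set sj := Equiv.swap (i+1) (i+2) with hsj
  have hsj' : Equiv.swap (i+1) (i+1+1) = sj := by rw [hsj]
  have hsis : si * si = 1 := Equiv.swap_mul_self _ _
  have hsjs : sj * sj = 1 := Equiv.swap_mul_self _ _
  have hbraid : si * (sj * si) = sj * (si * sj) := by
    rw [hsi, hsj]; exact swap_braid_perm i
  have hw1 : FinSupp (si * w) := finSupp_mul (finSupp_swap i) hw
  have hw2fs : FinSupp (sj * (si * w)) := finSupp_mul (finSupp_swap (i+1)) hw1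
  -- value computations
  have esii : si⁻¹ i = i+1 := by rw [hsi, Equiv.swap_inv, Equiv.swap_apply_left]
  have esii1 : si⁻¹ (i+1) = i := by rw [hsi, Equiv.swap_inv, Equiv.swap_apply_right]
  have esii2 : si⁻¹ (i+2) = i+2 := by
    rw [hsi, Equiv.swap_inv,
      Equiv.swap_apply_of_ne_of_ne (show i+2 ≠ i by omega) (show i+2 ≠ i+1 by omega)]
  have esji : sj⁻¹ i = i := by
    rw [hsj, Equiv.swap_inv,
      Equiv.swap_apply_of_ne_of_ne (show i ≠ i+1 by omega) (show i ≠ i+2 by omega)]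
  have esji1 : sj⁻¹ (i+1) = i+2 := by rw [hsj, Equiv.swap_inv, Equiv.swap_apply_left]
  have esji2 : sj⁻¹ (i+2) = i+1 := by rw [hsj, Equiv.swap_inv, Equiv.swap_apply_right]
  -- i+1 is a left descent of w1 = si * w
  have hd1 : (si * w)⁻¹ (i+2) < (si * w)⁻¹ (i+1) := by
    rw [inv_mul_apply, inv_mul_apply, esii1, esii2]
    exact lt_trans hdj hdi
  have hlw2 : len (sj * (si * w)) + 1 = len (si * w) := by
    have := len_swap_mul_lt hw1 (i := i+1) (by rw [show (i+1)+1 = i+2 from rfl]; exact hd1)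
    rwa [show (i+1)+1 = i+2 from rfl, hsj'] at this
  -- i is a left descent of w2 = sj * (si * w)
  have hd2 : (sj * (si * w))⁻¹ (i+1) < (sj * (si * w))⁻¹ i := by
    rw [inv_mul_apply, inv_mul_apply, inv_mul_apply, inv_mul_apply,
      esji, esji1, esii, esii2]
    exact hdj
  set v := si * (sj * (si * w)) with hv
  have hlv : len v + 1 = len (sj * (si * w)) := len_swap_mul_lt hw2fs hd2
  have hvfs : FinSupp v := finSupp_mul (finSupp_swap i) hw2fs
  obtain ⟨c, hc⟩ := exists_reducedWord hvfs
  -- (i :: c) reduced for si * v = w2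
  have hiv : si * v = sj * (si * w) := by rw [hv, ← mul_assoc, hsis, one_mul]
  have hw2red : IsReducedWord (sj * (si * w)) (i :: c) := by
    have := reduced_cons_of i hc (by rw [hiv]; omega)
    rwa [hiv] at this
  -- ((i+1) :: i :: c) reduced for sj * (si * v) = si * w
  have hjiv : sj * (si * v) = si * w := by rw [hiv, ← mul_assoc, hsjs, one_mul]
  have hjj : sj * (sj * (si * w)) = si * w := by rw [← mul_assoc, hsjs, one_mul]
  have hw1red : IsReducedWord (si * w) ((i+1) :: i :: c) := by
    have := reduced_cons_of (i+1) hw2red (by rw [hsj', hjj]; omega)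
    rwa [hsj', hjj] at this
  -- i is a left descent of sj * w
  have hwj : FinSupp (sj * w) := finSupp_mul (finSupp_swap (i+1)) hw
  have hd1' : (sj * w)⁻¹ (i+1) < (sj * w)⁻¹ i := by
    rw [inv_mul_apply, inv_mul_apply, esji, esji1]
    exact lt_trans hdj hdi
  have hlw2' : len (si * (sj * w)) + 1 = len (sj * w) := by
    have := len_swap_mul_lt hwj hd1'
    rwa [← hsi] at this
  -- ((i+1) :: c) reduced for sj * v = si * (sj * w)
  have hjv : sj * v = si * (sj * w) := by
    have h1 : sj * (si * (sj * (si * w))) = (sj * (si * sj)) * (si * w) := by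
      simp only [mul_assoc]
    rw [hv, h1, ← hbraid]
    simp only [mul_assoc]
    rw [← mul_assoc si si w, hsis, one_mul]
  have hjvred : IsReducedWord (si * (sj * w)) ((i+1) :: c) := by
    have := reduced_cons_of (i+1) hc (by rw [hsj', hjv]; omega)
    rwa [hsj', hjv] at this
  -- (i :: (i+1) :: c) reduced for si * (sj * v) = sj * w
  have hijv : si * (sj * v) = sj * w := by rw [hjv, ← mul_assoc, hsis, one_mul]
  have hii : si * (si * (sj * w)) = sj * w := by rw [← mul_assoc, hsis, one_mul]
  have hwjred : IsReducedWord (sj * w) (i :: (i+1) :: c) := by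
    have := reduced_cons_of i hjvred (by rw [hii]; omega)
    rwa [hii] at this
  have hlb' : b'.length < n := by
    have h1 := hb'.2; have h2 := ha'.2; omega
  calc divDiff i (divDiffWord a' f)
      = divDiff i (divDiffWord ((i+1) :: i :: c) f) := by
        rw [ih a'.length (by omega) a' ((i+1) :: i :: c) (si * w) rfl ha' hw1red f]
    _ = divDiff i (divDiff (i+1) (divDiff i (divDiffWord c f))) := by
        rw [divDiffWord_cons, divDiffWord_cons]
    _ = divDiff (i+1) (divDiff i (divDiff (i+1) (divDiffWord c f))) := divDiff_braid i _
    _ = divDiff (i+1) (divDiffWord (i :: (i+1) :: c) f) := by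
        rw [divDiffWord_cons, divDiffWord_cons]
    _ = divDiff (i+1) (divDiffWord b' f) := by
        rw [ih b'.length hlb' b' (i :: (i+1) :: c) (sj * w) rfl hb' hwjred f]

theorem divDiffWord_wd : ∀ (n : ℕ) (a b : List ℕ) (w : Equiv.Perm ℕ), a.length = n →
    IsReducedWord w a → IsReducedWord w b → ∀ f, divDiffWord a f = divDiffWord b f := by
  intro n
  induction n using Nat.strong_induction_on with
  | _ n ih =>
    intro a b w hn ha hb f
    match a, b with
    | [], [] => rfl
    | [], j :: b' =>
      exfalso
      have h1 : w = 1 := ha.1.symm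
      have := hb.2
      rw [h1, len_one] at this
      simp at this
    | i :: a', [] =>
      exfalso
      have h1 : w = 1 := hb.1.symm
      have := ha.2
      rw [h1, len_one] at this
      simp at this
    | i :: a', j :: b' =>
      have hw : FinSupp w := finSupp_of_reduced ha
      obtain ⟨ha', hlai⟩ := reduced_cons ha
      obtain ⟨hb', hlbj⟩ := reduced_cons hb
      have hdi : w⁻¹ (i+1) < w⁻¹ i := descent_of_reduced_cons ha
      have hdj : w⁻¹ (j+1) < w⁻¹ j := descent_of_reduced_cons hb
      simp only [List.length_cons] at hn
      rw [divDiffWord_cons, divDiffWord_cons]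
      have ih' : IHtype n := fun m hm => ih m hm
      rcases (show i = j ∨ i + 1 < j ∨ j + 1 < i ∨ j = i + 1 ∨ i = j + 1 by omega) with
        rfl | hfar | hfar | hnear | hnear
      · rw [ih a'.length (by omega) a' b' (Equiv.swap i (i+1) * w) rfl ha' hb' f]
      · exact far_case ih' (Or.inl hfar) hn ha' hb' hlai hlbj hdj hw f
      · exact far_case ih' (Or.inr hfar) hn ha' hb' hlai hlbj hdj hw f
      · subst hnear
        exact near_case ih' hn ha'
          (by rwa [show i+2 = i+1+1 from rfl]) hlai
          (by rwa [show i+2 = i+1+1 from rfl]) hdi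
          (by rwa [show i+2 = i+1+1 from rfl] at hdj) hw f
      · subst hnear
        have hblen : b'.length + 1 = n := by
          have h1 := ha'.2; have h2 := hb'.2; omega
        exact (near_case ih' hblen hb'
          (by rwa [show j+2 = j+1+1 from rfl]) hlbj
          (by rwa [show j+2 = j+1+1 from rfl]) hdj
          (by rwa [show j+2 = j+1+1 from rfl] at hdi) hw f).symm
section Sec4
open MvPolynomial
/-! ### Section 4: w₀, staircase, stability -/

lemma wZero_apply (n i : ℕ) : wZero n i = if i < n then n - 1 - i else i := rfl

lemma wZero_mul_self (n : ℕ) : wZero n * wZero n = 1 := by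
  ext x
  simp only [Equiv.Perm.mul_apply, wZero_apply, Equiv.Perm.one_apply]
  split_ifs <;> omega

lemma wZero_inv (n : ℕ) : (wZero n)⁻¹ = wZero n :=
  inv_eq_of_mul_eq_one_left (wZero_mul_self n)

lemma finSupp_wZero (n : ℕ) : FinSupp (wZero n) := by
  apply Set.Finite.subset (Set.finite_Iio n)
  intro j hj
  simp only [Set.mem_setOf_eq, wZero_apply] at hj
  simp only [Set.mem_Iio]
  split_ifs at hj <;> omega

def Tset (n : ℕ) : Set (ℕ × ℕ) := {p : ℕ × ℕ | p.1 < p.2 ∧ p.2 < n}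

lemma Tset_finite (n : ℕ) : (Tset n).Finite := by
  apply Set.Finite.subset ((Set.finite_Iio n).prod (Set.finite_Iio n))
  rintro ⟨a, b⟩ ⟨h1, h2⟩
  exact ⟨by simp; omega, by simpa using h2⟩

lemma invSet_subset_Tset {w : Equiv.Perm ℕ} {n : ℕ} (hb : ∀ i, w i ≠ i → i < n) :
    invSet w ⊆ Tset n := by
  rintro ⟨a, b⟩ ⟨hab0, hba0⟩
  have hab : a < b := hab0
  have hba : w b < w a := hba0
  refine ⟨hab, ?_⟩
  show b < n
  by_contra hbn
  have hwb : w b = b := fix_of_ge hb (by omega)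
  by_cases han : a < n
  · have := maps_lt hb han; omega
  · have hwa : w a = a := fix_of_ge hb (by omega); omega

lemma invSet_wZero_mul {w : Equiv.Perm ℕ} {n : ℕ} (hb : ∀ i, w i ≠ i → i < n) :
    invSet (wZero n * w) = Tset n \ invSet w := by
  ext ⟨a, b⟩
  simp only [invSet, Tset, Set.mem_setOf_eq, Set.mem_diff, Equiv.Perm.mul_apply, not_and]
  constructor
  · rintro ⟨hab, hba⟩
    by_cases hbn : b < n
    · have hwb := maps_lt hb hbn
      have hwa := maps_lt hb (show a < n by omega)
      rw [wZero_apply, wZero_apply, if_pos hwa, if_pos hwb] at hba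
      refine ⟨⟨hab, hbn⟩, fun _ h2 => ?_⟩
      omega
    · exfalso
      have hwb : w b = b := fix_of_ge hb (by omega)
      rw [hwb] at hba
      rw [wZero_apply, if_neg (by omega)] at hba
      by_cases han : a < n
      · have hwa := maps_lt hb han
        rw [wZero_apply, if_pos hwa] at hba
        omega
      · have hwa : w a = a := fix_of_ge hb (by omega)
        rw [hwa, wZero_apply, if_neg (by omega)] at hba
        omega
  · rintro ⟨⟨hab, hbn⟩, hnot⟩
    have hwb := maps_lt hb hbn
    have hwa := maps_lt hb (show a < n by omega)
    have hne : w a ≠ w b := fun h => by have := w.injective h; omega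
    have hlt : w a < w b := by
      rcases lt_trichotomy (w a) (w b) with h | h | h
      · exact h
      · exact absurd h hne
      · exact absurd h (by intro hh; exact absurd (hnot hab hh) (by omega))
    refine ⟨hab, ?_⟩
    rw [wZero_apply, wZero_apply, if_pos hwa, if_pos hwb]
    omega

lemma len_wZero_mul {w : Equiv.Perm ℕ} {n : ℕ} (hb : ∀ i, w i ≠ i → i < n) :
    len (wZero n * w) + len w = (Tset n).ncard := by
  rw [len_def, len_def, invSet_wZero_mul hb]
  have hsub := invSet_subset_Tset hb
  have hfin := Tset_finite n
  rw [Set.ncard_diff hsub (hfin.subset hsub)]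
  have hle : (invSet w).ncard ≤ (Tset n).ncard := Set.ncard_le_ncard hsub hfin
  omega

lemma len_inv_wZero {w : Equiv.Perm ℕ} {n : ℕ} (hb : ∀ i, w i ≠ i → i < n) :
    len (w⁻¹ * wZero n) + len w = (Tset n).ncard := by
  have h1 : (w⁻¹ * wZero n)⁻¹ = wZero n * w := by
    rw [mul_inv_rev, inv_inv, wZero_inv]
  rw [← len_inv (w⁻¹ * wZero n), h1]
  exact len_wZero_mul hb

lemma Tset_succ_ncard (n : ℕ) : (Tset (n+1)).ncard = (Tset n).ncard + n := by
  have hdecomp : Tset (n+1) = Tset n ∪ (fun a => (a, n)) '' (Set.Iio n) := by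
    ext ⟨a, b⟩
    simp only [Tset, Set.mem_setOf_eq, Set.mem_union, Set.mem_image, Set.mem_Iio,
      Prod.ext_iff]
    constructor
    · rintro ⟨hab, hbn⟩
      rcases eq_or_ne b n with rfl | hne
      · exact Or.inr ⟨a, hab, rfl, rfl⟩
      · exact Or.inl ⟨hab, by omega⟩
    · rintro (⟨hab, hbn⟩ | ⟨c, hc, rfl, rfl⟩)
      · exact ⟨hab, by omega⟩
      · exact ⟨hc, by omega⟩
  rw [hdecomp, Set.ncard_union_eq ?disj (Tset_finite n) (Set.Finite.image _ (Set.finite_Iio n))]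
  case disj =>
    rw [Set.disjoint_left]
    rintro ⟨a, b⟩ ⟨hab, hbn⟩ ⟨c, hc, heq⟩
    rw [Prod.ext_iff] at heq
    dsimp only [Tset] at hbn heq
    omega
  congr 1
  rw [Set.ncard_image_of_injective _ (fun x y h => by simpa using (Prod.ext_iff.mp h).1)]
  rw [show Set.Iio n = ↑(Finset.Iio n) by simp, Set.ncard_coe_finset, Nat.card_Iio]

/-- the word [n-1, ..., 1, 0] -/
def revRange (n : ℕ) : List ℕ := (List.range n).reverse

lemma revRange_succ (n : ℕ) : revRange (n+1) = n :: revRange n := by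
  simp [revRange, List.range_succ]

lemma revRange_length (n : ℕ) : (revRange n).length = n := by simp [revRange]

lemma wordProd_revRange (n : ℕ) : wordProd (revRange n) = wZero n * wZero (n+1) := by
  induction n with
  | zero =>
    show wordProd [] = _
    rw [wordProd_nil]
    ext x
    simp only [Equiv.Perm.one_apply, Equiv.Perm.mul_apply, wZero_apply]
    split_ifs <;> omega
  | succ n ih =>
    rw [revRange_succ, wordProd_cons, ih]
    ext x
    simp only [Equiv.Perm.mul_apply, wZero_apply, Equiv.swap_apply_def]
    split_ifs <;> omega

/-! ### the staircase computation -/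

lemma sAct_prod {i : ℕ} {α : Type*} (s : Finset α) (g : α → PolyRing) :
    sAct i (∏ j ∈ s, g j) = ∏ j ∈ s, sAct i (g j) := map_prod _ _ _

noncomputable def stairP (n k : ℕ) : PolyRing :=
  (∏ i ∈ Finset.range k, X i ^ (n-1-i)) * (∏ i ∈ Finset.Ico k (n+1), X i ^ (n-i))

lemma stairP_zero (n : ℕ) : stairP n 0 = staircase (n+1) := by
  rw [stairP, staircase, Finset.range_zero, Finset.prod_empty, one_mul]
  rw [show Finset.Ico 0 (n+1) = Finset.range (n+1) by rw [Finset.range_eq_Ico]]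
  apply Finset.prod_congr rfl
  intro i hi
  rw [show n + 1 - 1 - i = n - i from by omega]

lemma stairP_last (n : ℕ) : stairP n n = staircase n := by
  rw [stairP, staircase]
  rw [show Finset.Ico n (n+1) = {n} by rw [Finset.Ico_add_one_right_eq_Icc, Finset.Icc_self]]
  simp

lemma divDiff_step (k e : ℕ) (m : PolyRing) (hm : sAct k m = m) :
    divDiff k (m * (X k ^ (e+1) * X (k+1) ^ e)) = m * (X k ^ e * X (k+1) ^ e) := by
  apply divDiff_unique
  rw [sAct_mul, hm, sAct_mul, sAct_pow, sAct_pow, sAct_X_self, sAct_X_succ]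
  ring

lemma stairP_step {n k : ℕ} (hk : k < n) : divDiff k (stairP n k) = stairP n (k+1) := by
  have h1 : Finset.Ico k (n+1) = insert k (Finset.Ico (k+1) (n+1)) :=
    (Finset.insert_Ico_add_one_left_eq_Ico (by omega)).symm
  have h2 : Finset.Ico (k+1) (n+1) = insert (k+1) (Finset.Ico (k+2) (n+1)) :=
    (Finset.insert_Ico_add_one_left_eq_Ico (by omega)).symm
  set m : PolyRing :=
    (∏ i ∈ Finset.range k, X i ^ (n-1-i)) * (∏ i ∈ Finset.Ico (k+2) (n+1), X i ^ (n-i))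
    with hm
  have hminv : sAct k m = m := by
    rw [hm, sAct_mul, sAct_prod, sAct_prod]
    congr 1
    · apply Finset.prod_congr rfl
      intro i hi
      simp only [Finset.mem_range] at hi
      rw [sAct_pow, sAct_X_of_ne k i (by omega) (by omega)]
    · apply Finset.prod_congr rfl
      intro i hi
      simp only [Finset.mem_Ico] at hi
      rw [sAct_pow, sAct_X_of_ne k i (by omega) (by omega)]
  have e1 : stairP n k = m * (X k ^ (n-k-1+1) * X (k+1) ^ (n-k-1)) := by
    rw [stairP, h1, Finset.prod_insert (by simp), h2,
      Finset.prod_insert (by simp), hm]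
    rw [show n - k - 1 + 1 = n - k by omega, show n - (k+1) = n - k - 1 by omega]
    ring
  have e2 : stairP n (k+1) = m * (X k ^ (n-k-1) * X (k+1) ^ (n-k-1)) := by
    rw [stairP, h2, Finset.prod_insert (by simp), Finset.prod_range_succ, hm]
    rw [show n - 1 - k = n - k - 1 by omega, show n - (k+1) = n - k - 1 by omega]
    ring
  rw [e1, divDiff_step k (n-k-1) m hminv, e2]

lemma divDiffWord_revRange {n k : ℕ} (hk : k ≤ n) :
    divDiffWord (revRange k) (staircase (n+1)) = stairP n k := by
  induction k with
  | zero =>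
    rw [show revRange 0 = [] from rfl]
    rw [show divDiffWord [] (staircase (n+1)) = staircase (n+1) from rfl, stairP_zero]
  | succ k ih =>
    rw [revRange_succ, divDiffWord_cons, ih (by omega), stairP_step (by omega)]

lemma divDiffWord_append (a b : List ℕ) (f : PolyRing) :
    divDiffWord (a ++ b) f = divDiffWord a (divDiffWord b f) := by
  simp [divDiffWord, List.foldr_append]

/-! ### schubertIn and stability -/

lemma finSupp_of_bound {w : Equiv.Perm ℕ} {n : ℕ} (hb : ∀ i, w i ≠ i → i < n) :
    FinSupp w := by
  apply Set.Finite.subset (Set.finite_Iio n)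
  intro j hj
  exact hb j hj

lemma schubertIn_eq {n : ℕ} {w : Equiv.Perm ℕ} {a : List ℕ}
    (ha : IsReducedWord (w⁻¹ * wZero n) a) :
    schubertIn n w = divDiffWord a (staircase n) := by
  have hex : ∃ b : List ℕ, IsReducedWord (w⁻¹ * wZero n) b := ⟨a, ha⟩
  rw [schubertIn, dif_pos hex]
  exact divDiffWord_wd hex.choose.length hex.choose a (w⁻¹ * wZero n) rfl
    hex.choose_spec ha (staircase n)

lemma schubertIn_succ {n : ℕ} {w : Equiv.Perm ℕ} (hb : ∀ i, w i ≠ i → i < n) :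
    schubertIn (n+1) w = schubertIn n w := by
  have hw : FinSupp w := finSupp_of_bound hb
  have hufs : FinSupp (w⁻¹ * wZero n) := finSupp_mul (finSupp_inv hw) (finSupp_wZero n)
  obtain ⟨a, ha⟩ := exists_reducedWord hufs
  have hb1 : ∀ i, w i ≠ i → i < n + 1 := fun i hi => by have := hb i hi; omega
  -- a ++ revRange n is a reduced word for w⁻¹ * wZero (n+1)
  have ha1 : wordProd a = w⁻¹ * wZero n := ha.1
  have hprod : wordProd (a ++ revRange n) = w⁻¹ * wZero (n+1) := by
    rw [wordProd_append, ha1, wordProd_revRange, ← mul_assoc, mul_assoc (w⁻¹),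
      wZero_mul_self, mul_one]
  have hlen : (a ++ revRange n).length = len (w⁻¹ * wZero (n+1)) := by
    have h1 := len_inv_wZero hb
    have h2 := len_inv_wZero hb1
    have h3 := Tset_succ_ncard n
    have h4 := ha.2
    simp only [List.length_append, revRange_length]
    omega
  have hred : IsReducedWord (w⁻¹ * wZero (n+1)) (a ++ revRange n) := ⟨hprod, hlen⟩
  rw [schubertIn_eq hred, schubertIn_eq ha, divDiffWord_append,
    divDiffWord_revRange (le_refl n), stairP_last]

lemma schubertIn_stable {n m : ℕ} {w : Equiv.Perm ℕ} (hb : ∀ i, w i ≠ i → i < n)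
    (hnm : n ≤ m) : schubertIn m w = schubertIn n w := by
  induction m with
  | zero =>
    have : n = 0 := by omega
    subst this
    rfl
  | succ m ih =>
    rcases eq_or_lt_of_le hnm with rfl | hlt
    · rfl
    · have hbm : ∀ i, w i ≠ i → i < m := fun i hi => by have := hb i hi; omega
      rw [schubertIn_succ hbm, ih (by omega)]

end Sec4

/-! ### Section 5: main theorem -/

/-- For every `w ∈ S_∞` (a permutation of `{1,2,…}` fixing all but finitely many
integers) and every `i ≥ 1` (here `i : ℕ` indexes `s_{i+1}`, `∂_{i+1}`):
if `ℓ(w s_i) < ℓ(w)` then `∂_i 𝔖_w = 𝔖_{w s_i}`, and if `ℓ(w s_i) > ℓ(w)` then `∂ᵢ 𝔖_w = 0`. -/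
theorem divDiff_schubert (w : Equiv.Perm ℕ) (hw : {i : ℕ | w i ≠ i}.Finite) (i : ℕ) :
    (len (w * Equiv.swap i (i + 1)) < len w →
      divDiff i (schubert w) = schubert (w * Equiv.swap i (i + 1))) ∧
    (len w < len (w * Equiv.swap i (i + 1)) →
      divDiff i (schubert w) = 0) := by
  have hwf : FinSupp w := hw
  set w' := w * Equiv.swap i (i + 1) with hw'
  have hw'f : FinSupp w' := finSupp_mul hwf (finSupp_swap i)
  have hex1 : ∃ n, ∀ k, w k ≠ k → k < n := finSupp_bound hwf
  have hex2 : ∃ n, ∀ k, w' k ≠ k → k < n := finSupp_bound hw'f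
  set N1 := hex1.choose with hN1
  set N2 := hex2.choose with hN2
  set N := max N1 N2 with hN
  have hb1 : ∀ k, w k ≠ k → k < N1 := hex1.choose_spec
  have hb2 : ∀ k, w' k ≠ k → k < N2 := hex2.choose_spec
  have hbw : ∀ k, w k ≠ k → k < N := fun k hk => lt_of_lt_of_le (hb1 k hk) (le_max_left _ _)
  have hbw' : ∀ k, w' k ≠ k → k < N := fun k hk => lt_of_lt_of_le (hb2 k hk) (le_max_right _ _)
  have hschub : schubert w = schubertIn N w := by
    unfold schubert
    rw [dif_pos hex1]
    exact (schubertIn_stable hb1 (le_max_left _ _)).symm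
  have hschub' : schubert w' = schubertIn N w' := by
    unfold schubert
    rw [dif_pos hex2]
    exact (schubertIn_stable hb2 (le_max_right _ _)).symm
  have hne : w i ≠ w (i+1) := fun h => by have := w.injective h; omega
  have huu : w'⁻¹ * wZero N = Equiv.swap i (i+1) * (w⁻¹ * wZero N) := by
    rw [hw', mul_inv_rev, Equiv.swap_inv, mul_assoc]
  have hufs : FinSupp (w⁻¹ * wZero N) := finSupp_mul (finSupp_inv hwf) (finSupp_wZero N)
  have hu'fs : FinSupp (w'⁻¹ * wZero N) := finSupp_mul (finSupp_inv hw'f) (finSupp_wZero N)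
  have hlu : len (w⁻¹ * wZero N) + len w = (Tset N).ncard := len_inv_wZero hbw
  have hlu' : len (w'⁻¹ * wZero N) + len w' = (Tset N).ncard := len_inv_wZero hbw'
  constructor
  · intro hlt
    have hcase : w (i+1) < w i := by
      rcases lt_trichotomy (w i) (w (i+1)) with h | h | h
      · exfalso
        have := len_mul_swap_gt hwf h
        rw [← hw'] at this
        omega
      · exact absurd h hne
      · exact h
    have hlen1 : len w' + 1 = len w := by
      have := len_mul_swap_lt hwf hcase
      rwa [← hw'] at this
    obtain ⟨a, ha⟩ := exists_reducedWord hufs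
    have ha1 : wordProd a = w⁻¹ * wZero N := ha.1
    have ha2 : a.length = len (w⁻¹ * wZero N) := ha.2
    have hredu' : IsReducedWord (w'⁻¹ * wZero N) (i :: a) := by
      constructor
      · show wordProd (i :: a) = w'⁻¹ * wZero N
        rw [wordProd_cons, ha1, huu]
      · show (i :: a).length = len (w'⁻¹ * wZero N)
        simp only [List.length_cons]
        omega
    rw [hschub, hschub', schubertIn_eq ha, schubertIn_eq hredu', divDiffWord_cons]
  · intro hgt
    have hcase : w i < w (i+1) := by
      rcases lt_trichotomy (w i) (w (i+1)) with h | h | h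
      · exact h
      · exact absurd h hne
      · exfalso
        have := len_mul_swap_lt hwf h
        rw [← hw'] at this
        omega
    have hlen1 : len w' = len w + 1 := by
      have := len_mul_swap_gt hwf hcase
      rwa [← hw'] at this
    obtain ⟨b, hbred⟩ := exists_reducedWord hu'fs
    have hb1' : wordProd b = w'⁻¹ * wZero N := hbred.1
    have hb2' : b.length = len (w'⁻¹ * wZero N) := hbred.2
    have hredu : IsReducedWord (w⁻¹ * wZero N) (i :: b) := by
      constructor
      · show wordProd (i :: b) = w⁻¹ * wZero N
        rw [wordProd_cons, hb1', huu, ← mul_assoc, Equiv.swap_mul_self, one_mul]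
      · show (i :: b).length = len (w⁻¹ * wZero N)
        simp only [List.length_cons]
        omega
    rw [hschub, schubertIn_eq hredu, divDiffWord_cons, divDiff_divDiff]
end
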